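/- arXiv:1608.01954 — 9 statements merged into one kernel-verified Lean document; each statement's English description precedes it below -/
import Mathlib

section
/- Let A be an n×n real matrix and Δ an invertible diagonal n×n matrix such that Δ⁻¹·A·Δ is symmetric. Then for any sequence of distinct indices i₁, ..., i_k, the product A(i₁,i₂)·A(i₂,i₃)···A(i_{k-1},i_k)·A(i_k,i₁) equals A(i₁,i_k)·A(i_k,i_{k-1})···A(i₃,i₂)·A(i₂,i₁). -/
/-!
Write `Δ = diagonal d`. Symmetry of `Δ⁻¹ A Δ` says `A i j * d j / d i = A j i * d i / d j`,
i.e. `A i j * d j ^ 2 = A j i * d i ^ 2`. Multiplying these relations along a cycle, the weights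
`d ^ 2` appear once on each side and cancel, leaving the cycle product equal to the reversed one.
-/

open Matrix

theorem Matrix.IsDiag.isUnit_apply_self_of_isUnit_det {ι R : Type*} [Fintype ι] [DecidableEq ι]
    [CommRing R] {Δ : Matrix ι ι R} (hΔ : Δ.IsDiag) (hunit : IsUnit Δ.det) (i : ι) :
    IsUnit (Δ i i) := by
  rw [← hΔ.diagonal_diag, det_diagonal, IsUnit.prod_iff] at hunit
  exact hunit i (Finset.mem_univ i)

theorem Matrix.IsDiag.mul_sq_apply_self_eq_of_isSymm_conj {ι K : Type*} [Fintype ι]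
    [DecidableEq ι] [Field K] {A Δ : Matrix ι ι K} (hΔ : Δ.IsDiag) (hunit : IsUnit Δ.det)
    (hsym : (Δ⁻¹ * A * Δ)ᵀ = Δ⁻¹ * A * Δ) (i j : ι) :
    A i j * Δ j j ^ 2 = A j i * Δ i i ^ 2 := by
  obtain ⟨d, rfl⟩ : ∃ d, Δ = diagonal d := ⟨_, hΔ.diagonal_diag.symm⟩
  have hd (k : ι) : d k ≠ 0 := by
    simpa using (hΔ.isUnit_apply_self_of_isUnit_det hunit k).ne_zero
  have hinv : (diagonal d)⁻¹ = diagonal d⁻¹ := by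
    refine inv_eq_left_inv ?_
    rw [diagonal_mul_diagonal, ← diagonal_one]
    exact congrArg diagonal (funext fun k => inv_mul_cancel₀ (hd k))
  have hij := congrFun (congrFun hsym i) j
  simp only [hinv, transpose_apply, mul_diagonal, diagonal_mul, Pi.inv_apply] at hij
  field_simp [hd i, hd j] at hij
  simp only [diagonal_apply_eq]
  linear_combination -hij

theorem Finset.prod_comp_perm_eq_prod_comp_perm_swap {κ ι M : Type*} [Fintype κ] [CommMonoid M]
    {f : ι → ι → M} {w : ι → M} (hf : ∀ i j, f i j * w j = f j i * w i)
    (σ : Equiv.Perm κ) (v : κ → ι) (hw : ∀ k, IsUnit (w (v k))) :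
    ∏ k, f (v k) (v (σ k)) = ∏ k, f (v (σ k)) (v k) := by
  refine (IsUnit.prod_univ_iff.mpr hw).mul_right_cancel ?_
  calc (∏ k, f (v k) (v (σ k))) * ∏ k, w (v k)
      = ∏ k, f (v k) (v (σ k)) * w (v (σ k)) := by
        rw [prod_mul_distrib, ← Equiv.prod_comp σ (fun k => w (v k))]
    _ = ∏ k, f (v (σ k)) (v k) * w (v k) := by simp only [hf]
    _ = (∏ k, f (v (σ k)) (v k)) * ∏ k, w (v k) := prod_mul_distrib

theorem stmt_2 (n : ℕ) (A Δ : Matrix (Fin n) (Fin n) ℝ)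
    (hΔdiag : Δ.IsDiag) (hΔunit : IsUnit Δ.det)
    (hsym : (Δ⁻¹ * A * Δ)ᵀ = Δ⁻¹ * A * Δ) :
    ∀ (k : ℕ) (v : Fin k → Fin n), Function.Injective v →
      (∏ j : Fin k, A (v j) (v (finRotate k j))) =
        ∏ j : Fin k, A (v (finRotate k j)) (v j) := by
  intro k v _
  exact Finset.prod_comp_perm_eq_prod_comp_perm_swap
    (hΔdiag.mul_sq_apply_self_eq_of_isSymm_conj hΔunit hsym) (finRotate k) v
    fun j => (hΔdiag.isUnit_apply_self_of_isUnit_det hΔunit (v j)).pow 2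
end

section
/- Let A be an n×n real matrix with A i i = 0 for all i, such that for all i ≠ j, A i j · A j i > 0 or A i j = A j i = 0, and such that for every sequence of distinct indices i₁,...,i_k, A(i₁,i₂)·A(i₂,i₃)···A(i_k,i₁) = A(i₁,i_k)·A(i_k,i_{k-1})···A(i₂,i₁). Then there exists an invertible diagonal matrix Δ with positive diagonal entries such that Δ⁻¹·A·Δ is symmetric. -/
open Matrix SimpleGraph List

namespace Stmt4

variable {n : ℕ} (A : Matrix (Fin n) (Fin n) ℝ)

/-- The graph whose edges are the pairs with nonzero entries. -/
def G (A : Matrix (Fin n) (Fin n) ℝ) : SimpleGraph (Fin n) where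
  Adj i j := i ≠ j ∧ A i j ≠ 0 ∧ A j i ≠ 0
  symm := by constructor; intro i j ⟨h1, h2, h3⟩; exact ⟨h1.symm, h3, h2⟩
  loopless := by constructor; intro i ⟨h1, _⟩; exact h1 rfl

/-- Weight of a walk: product of the ratios `A j i / A i j` over the darts `(i, j)`. -/
noncomputable def wt {u v : Fin n} (p : (G A).Walk u v) : ℝ :=
  (p.darts.map fun d => A d.snd d.fst / A d.fst d.snd).prod

lemma wt_nil {u : Fin n} : wt A (SimpleGraph.Walk.nil : (G A).Walk u u) = 1 := by
  simp [wt]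

lemma wt_cons {u v w : Fin n} (h : (G A).Adj u v) (p : (G A).Walk v w) :
    wt A (SimpleGraph.Walk.cons h p) = (A v u / A u v) * wt A p := by
  simp [wt]

lemma wt_append {u v w : Fin n} (p : (G A).Walk u v) (q : (G A).Walk v w) :
    wt A (p.append q) = wt A p * wt A q := by
  simp [wt, SimpleGraph.Walk.darts_append]

lemma wt_copy {u v u' v' : Fin n} (p : (G A).Walk u v) (hu : u = u') (hv : v = v') :
    wt A (p.copy hu hv) = wt A p := by
  simp [wt]

lemma wt_reverse {u v : Fin n} (p : (G A).Walk u v) :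
    wt A p.reverse = (wt A p)⁻¹ := by
  induction p with
  | nil => simp [wt_nil]
  | cons h p ih =>
    rw [SimpleGraph.Walk.reverse_cons, wt_append, ih, wt_cons, wt_cons, wt_nil, mul_inv,
      inv_div]
    ring

lemma wt_pos (hC1 : ∀ i j : Fin n, i ≠ j → 0 < A i j * A j i ∨ (A i j = 0 ∧ A j i = 0))
    {u v : Fin n} (p : (G A).Walk u v) : 0 < wt A p := by
  apply List.prod_pos
  intro x hx
  simp only [List.mem_map] at hx
  obtain ⟨d, hd, rfl⟩ := hx
  obtain ⟨hne, h1, h2⟩ := d.adj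
  rcases hC1 d.fst d.snd hne with h | h
  · exact div_pos_iff.mpr (by rcases mul_pos_iff.mp h with ⟨a, b⟩ | ⟨a, b⟩ <;> [left; right] <;>
      exact ⟨by linarith, by linarith⟩)
  · exact absurd h.1 h1

lemma wt_eq_prod {V : Type} {G : SimpleGraph V} (f : V → V → ℝ) {u v : V} (p : G.Walk u v) :
      (p.darts.map fun d => f d.fst d.snd).prod
        = ∏ j : Fin p.length, f (p.getVert j) (p.getVert (j + 1)) := by
  induction p with
  | nil => exact (Fin.prod_univ_zero _).symm
  | cons h p ih =>
    rw [SimpleGraph.Walk.darts_cons, List.map_cons, List.prod_cons, ih,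
      SimpleGraph.Walk.length_cons, Fin.prod_univ_succ]
    simp [SimpleGraph.Walk.getVert_cons_succ, Fin.val_succ]

lemma support_tail_eq_ofFn {V : Type} {G : SimpleGraph V} {u v : V} (p : G.Walk u v) :
      p.support.tail = List.ofFn (fun j : Fin p.length => p.getVert (j + 1)) := by
  induction p with
  | nil => simp
  | cons h p ih =>
    rw [SimpleGraph.Walk.support_cons, List.tail_cons, SimpleGraph.Walk.length_cons,
      List.ofFn_succ, p.support_eq_cons, ih]
    simp [SimpleGraph.Walk.getVert_cons_succ, Fin.val_succ]

lemma coe_finRotate' {k : ℕ} (j : Fin k) :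
    (finRotate k j : ℕ) = if (j : ℕ) + 1 = k then 0 else (j : ℕ) + 1 := by
  cases k with
  | zero => exact j.elim0
  | succ m =>
    rw [coe_finRotate]
    by_cases h : j = Fin.last m
    · simp [h, Fin.val_last]
    · have : (j : ℕ) + 1 ≠ m + 1 := by
        intro hc
        exact h (Fin.ext (Nat.succ_injective hc))
      simp [h, this]
      omega

/-- Simple closed walks have weight 1, by the cycle condition C2. -/
lemma wt_cycle
    (hC2 : ∀ (k : ℕ) (v : Fin k → Fin n), Function.Injective v →
      (∏ j : Fin k, A (v j) (v (finRotate k j))) =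
        ∏ j : Fin k, A (v (finRotate k j)) (v j))
    {u : Fin n} (p : (G A).Walk u u) (hnd : p.support.tail.Nodup) :
    wt A p = 1 := by
  set k := p.length with hk
  set v : Fin k → Fin n := fun j => p.getVert (j + 1) with hv
  have hinj : Function.Injective v := by
    rw [support_tail_eq_ofFn] at hnd
    exact List.nodup_ofFn.mp hnd
  have hrot : ∀ j : Fin k, p.getVert ((finRotate k j : ℕ)) = v j := by
    intro j
    rw [coe_finRotate']
    split_ifs with h
    · rw [SimpleGraph.Walk.getVert_zero, hv]
      simp only []
      rw [h]
      exact (SimpleGraph.Walk.getVert_length p).symm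
    · rfl
  have hadj : ∀ j : Fin k, (G A).Adj (p.getVert j) (p.getVert (j + 1)) :=
    fun j => p.adj_getVert_succ j.isLt
  have h1 : wt A p = ∏ j : Fin k, A (v j) (p.getVert j) / A (p.getVert j) (v j) :=
    wt_eq_prod (fun a b => A b a / A a b) p
  have h2 : ∀ j : Fin k, A (v (finRotate k j)) (p.getVert ((finRotate k j : ℕ)))
        / A (p.getVert ((finRotate k j : ℕ))) (v (finRotate k j))
      = A (v (finRotate k j)) (v j) / A (v j) (v (finRotate k j)) := by
    intro j
    rw [hrot j]
  have h3 : wt A p = ∏ j : Fin k, A (v (finRotate k j)) (v j) / A (v j) (v (finRotate k j)) := by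
    rw [h1, ← Equiv.prod_comp (finRotate k)
      (fun j => A (v j) (p.getVert j) / A (p.getVert j) (v j))]
    exact Finset.prod_congr rfl fun j _ => h2 j
  rw [h3, Finset.prod_div_distrib, hC2 k v hinj, div_self]
  rw [Finset.prod_ne_zero_iff]
  intro j _
  have h4 := hadj (finRotate k j)
  rw [hrot j] at h4
  exact h4.2.2

/-- All closed walks have weight 1. -/
lemma wt_closed
    (hC2' : ∀ {u : Fin n} (p : (G A).Walk u u), p.support.tail.Nodup → wt A p = 1) :
    ∀ (L : ℕ) {u : Fin n} (p : (G A).Walk u u), p.length = L → wt A p = 1 := by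
  intro L
  induction L using Nat.strong_induction_on with
  | _ L IH =>
    intro u p hL
    by_cases hnd : p.support.tail.Nodup
    · exact hC2' p hnd
    · obtain ⟨w, hw⟩ := List.exists_duplicate_iff_not_nodup.mpr hnd
      have hwcount : 2 ≤ p.support.tail.count w := List.duplicate_iff_two_le_count.mp hw
      have hwsup : w ∈ p.support := List.tail_subset _ hw.mem
      have hdperm : (p.rotate w hwsup).darts ~ p.darts := (p.rotate_darts w hwsup).perm
      have hwtq : wt A (p.rotate w hwsup) = wt A p := (hdperm.map _).prod_eq
      have hlq : (p.rotate w hwsup).length = L := by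
        rw [← hL, ← SimpleGraph.Walk.length_darts, ← SimpleGraph.Walk.length_darts,
          hdperm.length_eq]
      have hqcount : 2 ≤ (p.rotate w hwsup).support.tail.count w := by
        rw [(p.support_rotate w hwsup).perm.count_eq]
        exact hwcount
      have hqnil : ¬ (p.rotate w hwsup).Nil := by
        intro hnil
        rw [SimpleGraph.Walk.nil_iff_length_eq] at hnil
        have h1 : (p.rotate w hwsup).support.tail.length = 0 := by
          rw [List.length_tail, SimpleGraph.Walk.length_support, hnil]
        have h2 := List.count_le_length (a := w) (l := (p.rotate w hwsup).support.tail)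
        omega
      obtain ⟨x, hadj, r, hqr⟩ := SimpleGraph.Walk.not_nil_iff.mp hqnil
      rw [hqr] at hwtq hlq hqcount
      have hrcount : 2 ≤ r.support.count w := by
        simpa using hqcount
      have hwr : w ∈ r.support := List.count_pos_iff.mp (by omega)
      have hsplit : (r.takeUntil w hwr).append (r.dropUntil w hwr) = r := r.take_spec hwr
      have hc1 : (r.takeUntil w hwr).support.count w = 1 :=
        r.count_support_takeUntil_eq_one hwr
      have hsupp : r.support = (r.takeUntil w hwr).support ++ (r.dropUntil w hwr).support.tail := by
        conv_lhs => rw [← hsplit]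
        exact SimpleGraph.Walk.support_append _ _
      have hr2count : 1 ≤ (r.dropUntil w hwr).support.tail.count w := by
        rw [hsupp, List.count_append] at hrcount
        omega
      have hr2len : 1 ≤ (r.dropUntil w hwr).length := by
        have h2 := List.count_le_length (a := w) (l := (r.dropUntil w hwr).support.tail)
        have h3 : (r.dropUntil w hwr).support.tail.length = (r.dropUntil w hwr).length := by
          rw [List.length_tail, SimpleGraph.Walk.length_support]
          omega
        omega
      have hlen := congrArg SimpleGraph.Walk.length hsplit
      rw [SimpleGraph.Walk.length_append] at hlen
      have hLr : r.length + 1 = L := by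
        rw [← hlq]
        simp [SimpleGraph.Walk.length_cons]
      have hwt1 : wt A (SimpleGraph.Walk.cons hadj (r.takeUntil w hwr)) = 1 := by
        apply IH ((r.takeUntil w hwr).length + 1) (by omega) _ (by simp)
      have hwt2 : wt A (r.dropUntil w hwr) = 1 := by
        apply IH ((r.dropUntil w hwr).length) (by omega) _ rfl
      have hsplitwt : wt A (SimpleGraph.Walk.cons hadj r)
          = wt A (SimpleGraph.Walk.cons hadj (r.takeUntil w hwr))
            * wt A (r.dropUntil w hwr) := by
        conv_lhs => rw [← hsplit]
        rw [wt_cons, wt_append, wt_cons]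
        ring
      rw [← hwtq, hsplitwt, hwt1, hwt2, mul_one]

lemma wt_closed'
    (hC2 : ∀ (k : ℕ) (v : Fin k → Fin n), Function.Injective v →
      (∏ j : Fin k, A (v j) (v (finRotate k j))) =
        ∏ j : Fin k, A (v (finRotate k j)) (v j))
    {u : Fin n} (p : (G A).Walk u u) : wt A p = 1 :=
  wt_closed A (fun q hnd => wt_cycle A hC2 q hnd) p.length p rfl

end Stmt4

open Stmt4 in
/- Statement 4: A cycle-symmetric matrix (zero diagonal, condition C1 on pairs and C2 on
cycles) is diagonally similar, via a positive diagonal matrix, to a symmetric matrix. -/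
theorem stmt_4 (n : ℕ) (A : Matrix (Fin n) (Fin n) ℝ)
    (hdiag : ∀ i, A i i = 0)
    (hC1 : ∀ i j : Fin n, i ≠ j → 0 < A i j * A j i ∨ (A i j = 0 ∧ A j i = 0))
    (hC2 : ∀ (k : ℕ) (v : Fin k → Fin n), Function.Injective v →
      (∏ j : Fin k, A (v j) (v (finRotate k j))) =
        ∏ j : Fin k, A (v (finRotate k j)) (v j)) :
    ∃ Δ : Matrix (Fin n) (Fin n) ℝ, Δ.IsDiag ∧ (∀ i, 0 < Δ i i) ∧ IsUnit Δ.det ∧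
      (Δ⁻¹ * A * Δ)ᵀ = Δ⁻¹ * A * Δ := by
  classical
  have hre : ∀ i : Fin n, (G A).Reachable (((G A).connectedComponentMk i).out) i :=
    fun i => (SimpleGraph.ConnectedComponent.eq).mp (Quot.out_eq _)
  let wk : ∀ i : Fin n, (G A).Walk (((G A).connectedComponentMk i).out) i :=
    fun i => (hre i).some
  set d : Fin n → ℝ := fun i => Real.sqrt (wt A (wk i)) with hd
  have hdpos : ∀ i, 0 < d i := fun i => Real.sqrt_pos.mpr (wt_pos A hC1 _)
  have hdsq : ∀ i, d i ^ 2 = wt A (wk i) := fun i => Real.sq_sqrt (wt_pos A hC1 _).le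
  have key : ∀ i j, A i j * d j ^ 2 = A j i * d i ^ 2 := by
    intro i j
    by_cases hij : i = j
    · subst hij; rfl
    by_cases hz : A i j = 0
    · have hz' : A j i = 0 := by
        rcases hC1 i j hij with h | h
        · rw [hz, zero_mul] at h; exact absurd h (lt_irrefl 0)
        · exact h.2
      rw [hz, hz', zero_mul, zero_mul]
    have hz' : A j i ≠ 0 := by
      rcases hC1 i j hij with h | h
      · intro hc; rw [hc, mul_zero] at h; exact absurd h (lt_irrefl 0)
      · exact absurd h.1 hz
    have hadj : (G A).Adj i j := ⟨hij, hz, hz'⟩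
    have hrep : ((G A).connectedComponentMk i).out = ((G A).connectedComponentMk j).out := by
      rw [SimpleGraph.ConnectedComponent.sound hadj.reachable]
    have hc : wt A ((wk i).append ((SimpleGraph.Walk.cons hadj (wk j).reverse).copy rfl
        hrep.symm)) = 1 := wt_closed' A hC2 _
    rw [wt_append, wt_copy, wt_cons, wt_reverse] at hc
    rw [hdsq, hdsq]
    have h1 : (0 : ℝ) < wt A (wk i) := wt_pos A hC1 _
    have h2 : (0 : ℝ) < wt A (wk j) := wt_pos A hC1 _
    field_simp at hc
    nlinarith [hc, h1, h2]
  refine ⟨Matrix.diagonal d, Matrix.isDiag_diagonal d, ?_, ?_, ?_⟩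
  · intro i; simpa using hdpos i
  · rw [Matrix.det_diagonal]
    exact (isUnit_iff_ne_zero).mpr (ne_of_gt (Finset.prod_pos fun i _ => hdpos i))
  · have hinv : (Matrix.diagonal d)⁻¹ = Matrix.diagonal (fun i => (d i)⁻¹) := by
      apply Matrix.inv_eq_right_inv
      rw [Matrix.diagonal_mul_diagonal, ← Matrix.diagonal_one]
      exact congrArg Matrix.diagonal (funext fun i => mul_inv_cancel₀ (ne_of_gt (hdpos i)))
    rw [hinv]
    ext i j
    rw [Matrix.transpose_apply, Matrix.mul_diagonal, Matrix.mul_diagonal,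
      Matrix.diagonal_mul, Matrix.diagonal_mul]
    have hdi := hdpos i
    have hdj := hdpos j
    have hk := key i j
    field_simp
    linear_combination key j i
end

section
/- Let B be an n×n real matrix whose off-diagonal entries satisfy B i j · B j i > 0 or B i j = B j i = 0 for all i ≠ j, and B i i = 0. Define B̄ by B̄ i j = sign(B i j) · sqrt(B i j · B j i). Then for every sequence of indices i₁,...,i_k with B(i₁,i₂)···B(i_{k-1},i_k)·B(i_k,i₁) equal to the corresponding reverse product B(i₁,i_k)···B(i₂,i₁), the product B(i₁,i₂)···B(i_k,i₁) equals B̄(i₁,i₂)···B̄(i_k,i₁). -/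
/-! Each factor `B i j * B j i` is nonnegative, so the product of the square roots is the square
root of the product of the forward cycle weight and the reverse one. When these weights agree this
is `|∏ B i j|`, and multiplying by the product of the signs recovers `∏ B i j`. -/

theorem Real.sign_mul_abs (x : ℝ) : Real.sign x * |x| = x := by
  rcases lt_trichotomy x 0 with hx | rfl | hx
  · rw [Real.sign_of_neg hx, abs_of_neg hx]; ring
  · simp
  · rw [Real.sign_of_pos hx, abs_of_pos hx, one_mul]

theorem Finset.prod_sign_mul_sqrt_mul_eq_prod {ι : Type*} (s : Finset ι) (a b : ι → ℝ)
    (hab : ∀ i ∈ s, 0 ≤ a i * b i) (h : ∏ i ∈ s, a i = ∏ i ∈ s, b i) :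
    ∏ i ∈ s, Real.sign (a i) * √(a i * b i) = ∏ i ∈ s, a i := by
  calc ∏ i ∈ s, Real.sign (a i) * √(a i * b i)
      = (∏ i ∈ s, Real.sign (a i)) * √((∏ i ∈ s, a i) * ∏ i ∈ s, b i) := by
        rw [Finset.prod_mul_distrib, ← Finset.prod_mul_distrib (f := a), Real.sqrt_prod s hab]
    _ = ∏ i ∈ s, Real.sign (a i) * |a i| := by
        rw [← h, Real.sqrt_mul_self_eq_abs, Finset.abs_prod, Finset.prod_mul_distrib]
    _ = ∏ i ∈ s, a i := by simp only [Real.sign_mul_abs]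

theorem mul_apply_swap_nonneg {n : Type*} (B : Matrix n n ℝ)
    (hB : ∀ i j, i ≠ j → 0 < B i j * B j i ∨ (B i j = 0 ∧ B j i = 0)) (i j : n) :
    0 ≤ B i j * B j i := by
  by_cases hij : i = j
  · subst hij
    exact mul_self_nonneg _
  · rcases hB i j hij with hpos | ⟨hzero, -⟩
    · exact hpos.le
    · simp [hzero]

theorem stmt_6_general (n : ℕ) (B : Matrix (Fin n) (Fin n) ℝ)
    (hC1 : ∀ i j : Fin n, i ≠ j → 0 < B i j * B j i ∨ (B i j = 0 ∧ B j i = 0)) :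
    ∀ (k : ℕ) (v : Fin k → Fin n),
      (∏ j : Fin k, B (v j) (v (finRotate k j))) =
        (∏ j : Fin k, B (v (finRotate k j)) (v j)) →
      (∏ j : Fin k, B (v j) (v (finRotate k j))) =
        ∏ j : Fin k, (Real.sign (B (v j) (v (finRotate k j))) *
          Real.sqrt (B (v j) (v (finRotate k j)) * B (v (finRotate k j)) (v j))) := by
  intro k v h
  exact (Finset.univ.prod_sign_mul_sqrt_mul_eq_prod _ _
    (fun j _ => mul_apply_swap_nonneg B hC1 _ _) h).symm

theorem stmt_6 (n : ℕ) (B : Matrix (Fin n) (Fin n) ℝ)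
    (hdiag : ∀ i, B i i = 0)
    (hC1 : ∀ i j : Fin n, i ≠ j → 0 < B i j * B j i ∨ (B i j = 0 ∧ B j i = 0)) :
    ∀ (k : ℕ) (v : Fin k → Fin n),
      (∏ j : Fin k, B (v j) (v (finRotate k j))) =
        (∏ j : Fin k, B (v (finRotate k j)) (v j)) →
      (∏ j : Fin k, B (v j) (v (finRotate k j))) =
        ∏ j : Fin k, (Real.sign (B (v j) (v (finRotate k j))) *
          Real.sqrt (B (v j) (v (finRotate k j)) * B (v (finRotate k j)) (v j))) :=
  stmt_6_general n B hC1
end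

section
/- Let A be an n×n real skew-symmetric matrix with characteristic polynomial x^n + a_1 x^{n-1} + ... + a_n. Then for even k, a_k = ∑ over even linear subdigraphs L covering exactly k vertices of (−1)^{|L|}·ω(L), where the sum runs only over vertex-disjoint unions of even-length cycles. -/
/-!
Expanding `det (X • 1 - Aᵀ)` over permutations, the zero diagonal of `A` forces a permutation `σ`
to move exactly `k` points if it is to contribute to the coefficient of `X ^ (n - k)`, and its
contribution is then `(-1) ^ (number of cycles of σ) * ∏ i ∈ σ.support, A i (σ i)`.
Reversing a cycle of length `ℓ` multiplies this weight by `(-1) ^ ℓ` when `Aᵀ = -A`. Hence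
reversing the odd cycle through the least point lying on an odd cycle is a sign-reversing
involution on the permutations having an odd cycle (it does not change which points lie on odd
cycles), and only the permutations all of whose cycles are even survive.
-/

open Equiv Equiv.Perm Finset Matrix Polynomial

namespace Matrix

variable {ι R : Type*} [Fintype ι] [DecidableEq ι] [CommRing R]

def permWeight (A : Matrix ι ι R) (σ : Perm ι) : R := ∏ i ∈ σ.support, A i (σ i)

lemma permWeight_mul_of_disjoint (A : Matrix ι ι R) {f g : Perm ι} (h : Disjoint f g) :
    A.permWeight (f * g) = A.permWeight f * A.permWeight g := by
  have hf : ∀ i ∈ f.support, (f * g) i = f i := fun i hi => by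
    rw [Perm.mul_apply, (h i).resolve_left (mem_support.mp hi)]
  have hg : ∀ i ∈ g.support, (f * g) i = g i := fun i hi => by
    rw [h.commute.eq, Perm.mul_apply, (h i).resolve_right (mem_support.mp hi)]
  rw [permWeight, h.support_mul, prod_union h.disjoint_support, permWeight, permWeight,
    prod_congr rfl fun i hi => congrArg (A i) (hf i hi),
    prod_congr rfl fun i hi => congrArg (A i) (hg i hi)]

lemma permWeight_inv {A : Matrix ι ι R} (hA : Aᵀ = -A) (σ : Perm ι) :
    A.permWeight σ⁻¹ = (-1) ^ #σ.support * A.permWeight σ := by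
  have hsupp : {a | σ a ≠ a} ⊆ (σ.support : Set ι) := (coe_support_eq_set_support σ).ge
  calc ∏ i ∈ σ⁻¹.support, A i (σ⁻¹ i) = ∏ i ∈ σ.support, A (σ i) i :=
        by rw [support_inv]; exact (σ.prod_comp' _ A hsupp).symm
    _ = ∏ i ∈ σ.support, (-1) * A i (σ i) := ?_
    _ = _ := by rw [prod_mul_distrib, prod_const, permWeight]
  refine prod_congr rfl fun i _ => ?_
  rw [neg_one_mul, ← neg_apply, ← hA, transpose_apply]

end Matrix

namespace Equiv.Perm

section DecidableEq

variable {α : Type*} [Fintype α] [DecidableEq α] {f g : Perm α}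

lemma sign_eq_neg_one_pow (σ : Perm α) :
    (sign σ : ℤ) = (-1) ^ (#σ.support + Multiset.card σ.cycleType) := by
  rw [sign_of_cycleType, sum_cycleType]
  push_cast
  rfl

lemma Disjoint.support_mul_inv (h : Disjoint f g) : (f * g⁻¹).support = (f * g).support := by
  rw [(disjoint_inv_right_iff.mpr h).support_mul, h.support_mul, support_inv]

lemma Disjoint.cycleType_mul_inv (h : Disjoint f g) : (f * g⁻¹).cycleType = (f * g).cycleType := by
  rw [(disjoint_inv_right_iff.mpr h).cycleType_mul, h.cycleType_mul, cycleType_inv]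

lemma Disjoint.card_support_cycleOf_mul (h : Disjoint f g) (x : α) :
    #((f * g).cycleOf x).support = #(f.cycleOf x).support + #(g.cycleOf x).support := by
  rw [h.cycleOf_mul_distrib,
    (h.mono (support_cycleOf_le f x) (support_cycleOf_le g x)).card_support_mul]

lemma Disjoint.card_support_cycleOf_mul_inv (h : Disjoint f g) (x : α) :
    #((f * g⁻¹).cycleOf x).support = #((f * g).cycleOf x).support := by
  rw [(disjoint_inv_right_iff.mpr h).card_support_cycleOf_mul, h.card_support_cycleOf_mul,
    ← support_inv (g.cycleOf x), cycleOf_inv]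
  -- the two sides carry different `DecidableRel g⁻¹.SameCycle` instances
  congr!

lemma Disjoint.permWeight_mul_inv {R : Type*} [CommRing R] {A : Matrix α α R} (hA : Aᵀ = -A)
    (h : Disjoint f g) :
    A.permWeight (f * g⁻¹) = (-1) ^ #g.support * A.permWeight (f * g) := by
  rw [A.permWeight_mul_of_disjoint (disjoint_inv_right_iff.mpr h), A.permWeight_mul_of_disjoint h,
    Matrix.permWeight_inv hA]
  ring

def reverseCycleOf (σ : Perm α) (a : α) : Perm α := σ * (σ.cycleOf a)⁻¹ * (σ.cycleOf a)⁻¹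

variable (σ : Perm α) (a : α)

lemma disjoint_mul_inv_cycleOf : Disjoint (σ * (σ.cycleOf a)⁻¹) (σ.cycleOf a) := by
  by_cases ha : σ a = a
  · rw [(cycleOf_eq_one_iff σ).mpr ha]
    exact disjoint_one_right _
  · exact disjoint_mul_inv_of_mem_cycleFactorsFinset
      (cycleOf_mem_cycleFactorsFinset_iff.mpr (mem_support.mpr ha))

lemma reverseCycleOf_eq_self_iff : σ.reverseCycleOf a = σ ↔ σ.cycleOf a ^ 2 = 1 := by
  rw [reverseCycleOf, mul_assoc, mul_eq_left, ← _root_.mul_inv_rev, inv_eq_one, sq]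

lemma mul_inv_cycleOf_apply_self : (σ * (σ.cycleOf a)⁻¹) a = a := by
  rw [Perm.mul_apply, cycleOf_inv, cycleOf_apply_self, ← Perm.mul_apply, mul_inv_cancel, one_apply]

lemma cycleOf_cycleOf_self : (σ.cycleOf a).cycleOf a = σ.cycleOf a := by
  conv_rhs => rw [← inv_mul_cancel_right σ (σ.cycleOf a),
    (disjoint_mul_inv_cycleOf σ a).cycleOf_mul_distrib,
    (cycleOf_eq_one_iff _).mpr (mul_inv_cycleOf_apply_self σ a), one_mul]

lemma cycleOf_reverseCycleOf : (σ.reverseCycleOf a).cycleOf a = (σ.cycleOf a)⁻¹ := by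
  rw [reverseCycleOf,
    (disjoint_inv_right_iff.mpr (disjoint_mul_inv_cycleOf σ a)).cycleOf_mul_distrib,
    (cycleOf_eq_one_iff _).mpr (mul_inv_cycleOf_apply_self σ a), one_mul, ← cycleOf_inv,
    cycleOf_cycleOf_self]

lemma reverseCycleOf_reverseCycleOf : (σ.reverseCycleOf a).reverseCycleOf a = σ := by
  rw [reverseCycleOf, cycleOf_reverseCycleOf, reverseCycleOf]
  group

lemma support_reverseCycleOf : (σ.reverseCycleOf a).support = σ.support := by
  rw [reverseCycleOf, (disjoint_mul_inv_cycleOf σ a).support_mul_inv, inv_mul_cancel_right]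

lemma cycleType_reverseCycleOf : (σ.reverseCycleOf a).cycleType = σ.cycleType := by
  rw [reverseCycleOf, (disjoint_mul_inv_cycleOf σ a).cycleType_mul_inv, inv_mul_cancel_right]

lemma card_support_cycleOf_reverseCycleOf (x : α) :
    #((σ.reverseCycleOf a).cycleOf x).support = #(σ.cycleOf x).support := by
  rw [reverseCycleOf, (disjoint_mul_inv_cycleOf σ a).card_support_cycleOf_mul_inv,
    inv_mul_cancel_right]

lemma permWeight_reverseCycleOf {R : Type*} [CommRing R] {A : Matrix α α R} (hA : Aᵀ = -A) :
    A.permWeight (σ.reverseCycleOf a) = (-1) ^ #(σ.cycleOf a).support * A.permWeight σ := by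
  rw [reverseCycleOf, (disjoint_mul_inv_cycleOf σ a).permWeight_mul_inv hA, inv_mul_cancel_right]

lemma reverseCycleOf_ne_self (h : Odd #(σ.cycleOf a).support) : σ.reverseCycleOf a ≠ σ := by
  have hmove : σ a ≠ a := fun hfix => by
    rw [(cycleOf_eq_one_iff σ).mpr hfix, support_one, card_empty] at h
    exact Nat.not_odd_zero h
  rw [Ne, reverseCycleOf_eq_self_iff]
  intro hsq
  have hdvd := orderOf_dvd_of_pow_eq_one hsq
  rw [(isCycle_cycleOf σ hmove).orderOf] at hdvd
  rcases (Nat.dvd_prime Nat.prime_two).mp hdvd with h1 | h2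
  · exact card_support_ne_one _ h1
  · exact Nat.not_even_iff_odd.mpr h (h2 ▸ even_two)

end DecidableEq

section LinearOrder

variable {α : Type*} [Fintype α] [LinearOrder α] (σ : Perm α)

def oddCycleSupport : Finset α := {x | Odd #(σ.cycleOf x).support}

lemma oddCycleSupport_reverseCycleOf (a : α) :
    (σ.reverseCycleOf a).oddCycleSupport = σ.oddCycleSupport := by
  ext x
  simp only [oddCycleSupport, mem_filter, card_support_cycleOf_reverseCycleOf]

lemma oddCycleSupport_nonempty {σ : Perm α} (h : ∃ m ∈ σ.cycleType, Odd m) :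
    σ.oddCycleSupport.Nonempty := by
  obtain ⟨m, hm, hodd⟩ := h
  obtain ⟨c, hc, rfl⟩ := Multiset.mem_map.mp (cycleType_def σ ▸ hm)
  obtain ⟨x, hx⟩ := (mem_cycleFactorsFinset_iff.mp hc).1.nonempty_support
  refine ⟨x, mem_filter.mpr ⟨mem_univ x, ?_⟩⟩
  rwa [← cycle_is_cycleOf hx hc]

end LinearOrder

end Equiv.Perm

namespace Matrix

section DecidableEq

variable {ι R : Type*} [Fintype ι] [DecidableEq ι] [CommRing R]

lemma prod_charmatrix_transpose_apply {A : Matrix ι ι R} (hdiag : ∀ i, A i i = 0) (σ : Perm ι) :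
    ∏ i, charmatrix Aᵀ (σ i) i =
      C ((-1) ^ #σ.support * A.permWeight σ) * X ^ (Fintype.card ι - #σ.support) := by
  rw [← prod_mul_prod_compl σ.support, ← card_compl]
  congr 1
  · rw [_root_.map_mul, map_pow, _root_.map_neg, _root_.map_one, permWeight, map_prod,
      ← prod_const, ← prod_mul_distrib]
    refine prod_congr rfl fun i hi => ?_
    rw [charmatrix_apply_ne _ _ _ (mem_support.mp hi), neg_one_mul, transpose_apply]
  · rw [← prod_const]
    refine prod_congr rfl fun i hi => ?_
    rw [notMem_support.mp (mem_compl.mp hi), charmatrix_apply_eq, transpose_apply, hdiag,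
      map_zero, sub_zero]

lemma coeff_charpoly_of_diag_eq_zero {A : Matrix ι ι R} (hdiag : ∀ i, A i i = 0) {k : ℕ}
    (hk : k ≤ Fintype.card ι) :
    A.charpoly.coeff (Fintype.card ι - k) =
      ∑ σ : Perm ι with #σ.support = k, (-1) ^ Multiset.card σ.cycleType * A.permWeight σ := by
  rw [← charpoly_transpose, charpoly, det_apply, finsetSum_coeff, sum_filter]
  refine sum_congr rfl fun σ _ => ?_
  have hsupp : #σ.support ≤ Fintype.card ι := card_le_univ _
  rw [prod_charmatrix_transpose_apply hdiag, Units.smul_def, coeff_smul, coeff_C_mul_X_pow]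
  by_cases h : #σ.support = k
  · rw [if_pos (by omega), if_pos h, zsmul_eq_mul, sign_eq_neg_one_pow, Int.cast_pow,
      Int.cast_neg, Int.cast_one, pow_add]
    calc _ = ((-1) ^ #σ.support * (-1) ^ #σ.support : R) * (-1) ^ Multiset.card σ.cycleType *
          A.permWeight σ := by ring
      _ = _ := by rw [← mul_pow, neg_one_mul, neg_neg, one_pow, one_mul]
  · rw [if_neg (by omega), if_neg h, smul_zero]

end DecidableEq

section LinearOrder

variable {ι R : Type*} [Fintype ι] [LinearOrder ι] [CommRing R]

theorem sum_filter_not_forall_even_cycleType_eq_zero {A : Matrix ι ι R} (hA : Aᵀ = -A) (k : ℕ) :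
    ∑ σ : Perm ι with #σ.support = k ∧ ¬∀ m ∈ σ.cycleType, Even m,
      (-1) ^ Multiset.card σ.cycleType * A.permWeight σ = 0 := by
  have hne : ∀ σ ∈ ({σ : Perm ι | #σ.support = k ∧ ¬∀ m ∈ σ.cycleType, Even m} : Finset _),
      σ.oddCycleSupport.Nonempty := fun σ hσ =>
    oddCycleSupport_nonempty (by simpa using (mem_filter.mp hσ).2.2)
  have hodd : ∀ (σ : Perm ι) hσ, Odd #(σ.cycleOf (σ.oddCycleSupport.min' (hne σ hσ))).support :=
    fun σ hσ => (mem_filter.mp (min'_mem _ (hne σ hσ))).2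
  refine sum_involution (fun σ hσ => σ.reverseCycleOf (σ.oddCycleSupport.min' (hne σ hσ)))
    (fun σ hσ => ?_) (fun σ hσ _ => reverseCycleOf_ne_self _ _ (hodd σ hσ)) (fun σ hσ => ?_)
    (fun σ hσ => ?_)
  · rw [cycleType_reverseCycleOf, permWeight_reverseCycleOf _ _ hA, (hodd σ hσ).neg_one_pow]
    ring
  · simp only [mem_filter, mem_univ, true_and, support_reverseCycleOf,
      cycleType_reverseCycleOf] at hσ ⊢
    exact hσ
  · set a := σ.oddCycleSupport.min' (hne σ hσ)
    have hmin : ∀ h, (σ.reverseCycleOf a).oddCycleSupport.min' h = a := fun _ => by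
      congr 1
      exact oddCycleSupport_reverseCycleOf σ a
    rw [hmin, reverseCycleOf_reverseCycleOf]

end LinearOrder

end Matrix

theorem stmt_10 (n : ℕ) (A : Matrix (Fin n) (Fin n) ℝ) (hskew : Aᵀ = -A) :
    ∀ k ≤ n, Even k → A.charpoly.coeff (n - k) =
      ∑ σ ∈ Finset.univ.filter
          (fun σ : Equiv.Perm (Fin n) => σ.support.card = k ∧ ∀ c ∈ σ.cycleType, Even c),
        (-1 : ℝ) ^ σ.cycleType.card * ∏ i ∈ σ.support, A i (σ i) := by
  intro k hk _
  have hdiag : ∀ i, A i i = 0 := fun i => by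
    have hii := congr_fun₂ hskew i i
    rw [transpose_apply, Matrix.neg_apply] at hii
    linarith
  have hcoeff := coeff_charpoly_of_diag_eq_zero hdiag (k := k) (by rwa [Fintype.card_fin])
  rw [Fintype.card_fin] at hcoeff
  rw [hcoeff, ← sum_filter_add_sum_filter_not _ fun σ => ∀ m ∈ σ.cycleType, Even m,
    filter_filter, filter_filter, sum_filter_not_forall_even_cycleType_eq_zero hskew, add_zero]
  rfl
end

section
/- Let S be an n×n real nonnegative symmetric matrix with zero diagonal whose associated digraph has no directed cycle of even length greater than 2 (equivalently, the underlying graph has no even cycles). Let A and B be two real matrices with zero diagonal such that |A i j| = |B i j| = S i j for all i,j, A i j·A j i < 0 and B i j·B j i < 0 whenever S i j ≠ 0. Then A and B have the same characteristic polynomial. -/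
open Matrix

namespace Stmt13

open Equiv Equiv.Perm Finset Polynomial

variable {n : ℕ}

/-- pairing product lemma -/
lemma prodPair {M : Type*} [CommMonoid M] (σ : Equiv.Perm (Fin n)) (f g : Fin n → M) :
    ∀ s : Finset (Fin n), (∀ i ∈ s, σ i ∈ s) → (∀ i ∈ s, σ (σ i) = i) →
      (∀ i ∈ s, σ i ≠ i) → (∀ i ∈ s, f i * f (σ i) = g i * g (σ i)) →
      ∏ i ∈ s, f i = ∏ i ∈ s, g i := by
  intro s
  induction s using Finset.strongInduction with
  | _ s ih =>
    intro hmem hinv hne hfg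
    obtain rfl | ⟨x, hx⟩ := s.eq_empty_or_nonempty
    · simp
    have hσx : σ x ∈ s := hmem x hx
    have hxne : σ x ≠ x := hne x hx
    have hsub : {x, σ x} ⊆ s := by
      intro y hy
      simp only [Finset.mem_insert, Finset.mem_singleton] at hy
      rcases hy with rfl | rfl <;> assumption
    have hss : s \ {x, σ x} ⊂ s :=
      Finset.ssubset_iff.2 ⟨x, by simp, by
        intro y hy
        rcases Finset.mem_insert.1 hy with rfl | hy
        · exact hx
        · exact (Finset.mem_sdiff.1 hy).1⟩
    have hmem' : ∀ i ∈ s \ {x, σ x}, σ i ∈ s \ {x, σ x} := by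
      intro i hi
      rw [Finset.mem_sdiff] at hi ⊢
      obtain ⟨hi, hnot⟩ := hi
      simp only [Finset.mem_insert, Finset.mem_singleton, not_or] at hnot ⊢
      refine ⟨hmem i hi, ?_, ?_⟩
      · intro hcontra
        exact hnot.2 (by rw [← hcontra, hinv i hi])
      · intro hcontra
        apply hnot.1
        have := congrArg σ hcontra
        rwa [hinv i hi, hinv x hx] at this
    have key : ∏ i ∈ s \ {x, σ x}, f i = ∏ i ∈ s \ {x, σ x}, g i :=
      ih _ hss hmem' (fun i hi => hinv i (Finset.sdiff_subset hi))
        (fun i hi => hne i (Finset.sdiff_subset hi))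
        (fun i hi => hfg i (Finset.sdiff_subset hi))
    rw [← Finset.prod_sdiff hsub, ← Finset.prod_sdiff hsub, key,
      Finset.prod_pair hxne.symm, Finset.prod_pair hxne.symm, hfg x hx]

lemma permInvApplySelf {α : Type*} (σ : Equiv.Perm α) (x : α) : σ⁻¹ (σ x) = x :=
  σ.symm_apply_apply x

lemma permApplyInvSelf {α : Type*} (σ : Equiv.Perm α) (x : α) : σ (σ⁻¹ x) = x :=
  σ.apply_symm_apply x

lemma permSameCycleInvApplyRight {α : Type*} {σ : Equiv.Perm α} {x y : α} :
    σ.SameCycle x (σ⁻¹ y) ↔ σ.SameCycle x y :=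
  Equiv.Perm.sameCycle_symm_apply_right

lemma zpowAgree {α : Type*} (u w : Equiv.Perm α) (p : α → Prop)
    (hu : ∀ x, p x → u x = w x) (hp : ∀ x, p x → p (u x)) (hp' : ∀ x, p x → p (u⁻¹ x))
    (x : α) (hx : p x) : ∀ m : ℤ, (u ^ m) x = (w ^ m) x ∧ p ((u ^ m) x) := by
  have hinv : ∀ y, p y → u⁻¹ y = w⁻¹ y := by
    intro y hy
    have h1 : w (u⁻¹ y) = y := by
      rw [← hu _ (hp' y hy)]; exact permApplyInvSelf u y
    conv_rhs => rw [← h1]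
    rw [permInvApplySelf]
  intro m
  induction m using Int.induction_on with
  | zero => simpa using hx
  | succ k ihk =>
    obtain ⟨h1, h2⟩ := ihk
    have e1 : (u ^ ((k : ℤ) + 1)) x = u ((u ^ (k : ℤ)) x) := by
      rw [add_comm, _root_.zpow_add, zpow_one, Equiv.Perm.mul_apply]
    have e2 : (w ^ ((k : ℤ) + 1)) x = w ((w ^ (k : ℤ)) x) := by
      rw [add_comm, _root_.zpow_add, zpow_one, Equiv.Perm.mul_apply]
    constructor
    · rw [e1, e2, hu _ h2, h1]
    · rw [e1]; exact hp _ h2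
  | pred k ihk =>
    obtain ⟨h1, h2⟩ := ihk
    have e1 : (u ^ (-(k : ℤ) - 1)) x = u⁻¹ ((u ^ (-(k : ℤ))) x) := by
      have : (-(k : ℤ) - 1) = -1 + -(k : ℤ) := by ring
      rw [this, _root_.zpow_add, _root_.zpow_neg_one, Equiv.Perm.mul_apply]
    have e2 : (w ^ (-(k : ℤ) - 1)) x = w⁻¹ ((w ^ (-(k : ℤ))) x) := by
      have : (-(k : ℤ) - 1) = -1 + -(k : ℤ) := by ring
      rw [this, _root_.zpow_add, _root_.zpow_neg_one, Equiv.Perm.mul_apply]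
    constructor
    · rw [e1, e2, hinv _ h2, h1]
    · rw [e1]; exact hp' _ h2


/-- points on cycles of length ≥ 3 -/
def badSet (σ : Equiv.Perm (Fin n)) : Finset (Fin n) :=
  Finset.univ.filter fun i => σ (σ i) ≠ i

/-- reverse the cycle of the least point on a long cycle -/
def revCyc (σ : Equiv.Perm (Fin n)) : Equiv.Perm (Fin n) :=
  if h : (badSet σ).Nonempty then
    ((σ.cycleOf ((badSet σ).min' h))⁻¹) * ((σ.cycleOf ((badSet σ).min' h))⁻¹) * σ
  else σ

section NonInv

variable (σ : Equiv.Perm (Fin n)) (h : (badSet σ).Nonempty)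

def i0 : Fin n := (badSet σ).min' h

lemma revCyc_eq : revCyc σ = (σ.cycleOf (i0 σ h))⁻¹ * (σ.cycleOf (i0 σ h))⁻¹ * σ :=
  dif_pos h

lemma bad_i0 : σ (σ (i0 σ h)) ≠ i0 σ h := by
  have := (badSet σ).min'_mem h
  simp only [badSet, Finset.mem_filter] at this
  exact this.2

lemma fix_i0 : σ (i0 σ h) ≠ i0 σ h := by
  intro hc
  exact bad_i0 σ h (by rw [hc, hc])

/-- every point on the cycle of i0 satisfies σ² j ≠ j -/
lemma bad_of_sameCycle : ∀ j, σ.SameCycle (i0 σ h) j → σ (σ j) ≠ j := by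
  rintro j ⟨b, rfl⟩ hj
  apply bad_i0 σ h
  have h2 : (σ ^ (2 : ℕ)) ((σ ^ b) (i0 σ h)) = (σ ^ b) (i0 σ h) := by
    rw [pow_two, Equiv.Perm.mul_apply]; exact hj
  have comm : σ ^ (2 : ℕ) * σ ^ (-b) = σ ^ (-b) * σ ^ (2 : ℕ) := by
    rw [← zpow_natCast, ← _root_.zpow_add, ← _root_.zpow_add, add_comm]
  have : (σ ^ (2:ℕ)) (i0 σ h) = i0 σ h := by
    have hb : (σ ^ (-b)) ((σ ^ b) (i0 σ h)) = i0 σ h := by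
      rw [← Equiv.Perm.mul_apply, ← _root_.zpow_add, neg_add_cancel, zpow_zero,
        Equiv.Perm.one_apply]
    calc (σ ^ (2:ℕ)) (i0 σ h) = (σ ^ (2:ℕ)) ((σ ^ (-b)) ((σ ^ b) (i0 σ h))) := by rw [hb]
    _ = ((σ ^ (2:ℕ)) * (σ ^ (-b))) ((σ ^ b) (i0 σ h)) := rfl
    _ = ((σ ^ (-b)) * (σ ^ (2:ℕ))) ((σ ^ b) (i0 σ h)) := by rw [comm]
    _ = (σ ^ (-b)) ((σ ^ (2:ℕ)) ((σ ^ b) (i0 σ h))) := rfl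
    _ = (σ ^ (-b)) ((σ ^ b) (i0 σ h)) := by rw [h2]
    _ = i0 σ h := hb
  rw [pow_two, Equiv.Perm.mul_apply] at this
  exact this

lemma fix_of_sameCycle : ∀ j, σ.SameCycle (i0 σ h) j → σ j ≠ j := by
  intro j hj hc
  exact bad_of_sameCycle σ h j hj (by rw [hc, hc])

lemma cyc_apply_of {j : Fin n} (hj : σ.SameCycle (i0 σ h) j) :
    σ.cycleOf (i0 σ h) j = σ j :=
  hj.cycleOf_apply

lemma cyc_apply_not {j : Fin n} (hj : ¬ σ.SameCycle (i0 σ h) j) :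
    σ.cycleOf (i0 σ h) j = j :=
  Equiv.Perm.cycleOf_apply_of_not_sameCycle hj

lemma cyc_inv_apply_of {j : Fin n} (hj : σ.SameCycle (i0 σ h) j) :
    (σ.cycleOf (i0 σ h))⁻¹ j = σ⁻¹ j := by
  have h1 : σ.SameCycle (i0 σ h) (σ⁻¹ j) := by
    rwa [permSameCycleInvApplyRight]
  have h2 : σ.cycleOf (i0 σ h) (σ⁻¹ j) = j := by
    rw [cyc_apply_of σ h h1, permApplyInvSelf]
  conv_lhs => rw [← h2]
  rw [permInvApplySelf]

lemma cyc_inv_apply_not {j : Fin n} (hj : ¬ σ.SameCycle (i0 σ h) j) :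
    (σ.cycleOf (i0 σ h))⁻¹ j = j := by
  have h2 : σ.cycleOf (i0 σ h) j = j := cyc_apply_not σ h hj
  conv_lhs => rw [← h2]
  rw [permInvApplySelf]

lemma revCyc_apply_of {j : Fin n} (hj : σ.SameCycle (i0 σ h) j) :
    revCyc σ j = (σ.cycleOf (i0 σ h))⁻¹ j := by
  rw [revCyc_eq σ h, Equiv.Perm.mul_apply, Equiv.Perm.mul_apply]
  have h1 : σ.SameCycle (i0 σ h) (σ j) := Equiv.Perm.SameCycle.apply_right hj
  rw [cyc_inv_apply_of σ h h1, permInvApplySelf]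

lemma revCyc_apply_not {j : Fin n} (hj : ¬ σ.SameCycle (i0 σ h) j) :
    revCyc σ j = σ j := by
  rw [revCyc_eq σ h, Equiv.Perm.mul_apply, Equiv.Perm.mul_apply]
  have h1 : ¬ σ.SameCycle (i0 σ h) (σ j) := by
    intro hc; exact hj (by rwa [Equiv.Perm.sameCycle_apply_right] at hc)
  rw [cyc_inv_apply_not σ h h1, cyc_inv_apply_not σ h h1]

end NonInv


section NonInv2

variable (σ : Equiv.Perm (Fin n)) (h : (badSet σ).Nonempty)

include h

lemma revCyc_inv_apply_of {j : Fin n} (hj : σ.SameCycle (i0 σ h) j) :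
    (revCyc σ)⁻¹ j = σ j := by
  have h1 : σ.SameCycle (i0 σ h) (σ j) := Equiv.Perm.SameCycle.apply_right hj
  have h2 : revCyc σ (σ j) = j := by
    rw [revCyc_apply_of σ h h1, cyc_inv_apply_of σ h h1, permInvApplySelf]
  conv_lhs => rw [← h2]
  rw [permInvApplySelf]

lemma sameCycle_revCyc (j : Fin n) :
    (revCyc σ).SameCycle (i0 σ h) j ↔ σ.SameCycle (i0 σ h) j := by
  have key := zpowAgree (revCyc σ) (σ.cycleOf (i0 σ h))⁻¹ (σ.SameCycle (i0 σ h))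
    (fun x hx => revCyc_apply_of σ h hx)
    (fun x hx => by
      rw [revCyc_apply_of σ h hx, cyc_inv_apply_of σ h hx]
      rwa [permSameCycleInvApplyRight])
    (fun x hx => by
      rw [revCyc_inv_apply_of σ h hx]
      rwa [Equiv.Perm.sameCycle_apply_right])
    (i0 σ h) (Equiv.Perm.SameCycle.refl σ (i0 σ h))
  constructor
  · rintro ⟨b, rfl⟩
    exact (key b).2
  · rintro ⟨b, rfl⟩
    refine ⟨-b, ?_⟩
    rw [(key (-b)).1, _root_.inv_zpow', neg_neg ,Equiv.Perm.cycleOf_zpow_apply_self]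
  
lemma cycleOf_revCyc :
    (revCyc σ).cycleOf (i0 σ h) = (σ.cycleOf (i0 σ h))⁻¹ := by
  ext j
  rw [Equiv.Perm.cycleOf_apply]
  by_cases hj : σ.SameCycle (i0 σ h) j
  · rw [if_pos ((sameCycle_revCyc σ h j).2 hj), revCyc_apply_of σ h hj]
  · rw [if_neg (fun hc => hj ((sameCycle_revCyc σ h j).1 hc)), cyc_inv_apply_not σ h hj]

lemma badSet_revCyc : badSet (revCyc σ) = badSet σ := by
  ext j
  simp only [badSet, Finset.mem_filter, Finset.mem_univ, true_and]
  by_cases hj : σ.SameCycle (i0 σ h) j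
  · have hrj : σ.SameCycle (i0 σ h) (σ⁻¹ j) := by
      rwa [permSameCycleInvApplyRight]
    have e1 : revCyc σ (revCyc σ j) = σ⁻¹ (σ⁻¹ j) := by
      rw [revCyc_apply_of σ h hj, cyc_inv_apply_of σ h hj, revCyc_apply_of σ h hrj,
        cyc_inv_apply_of σ h hrj]
    constructor
    · intro _ hc
      exact bad_of_sameCycle σ h j hj hc
    · intro _ hc
      apply bad_of_sameCycle σ h j hj
      rw [e1] at hc
      have := congrArg σ (congrArg σ hc)
      rw [permApplyInvSelf, permApplyInvSelf] at this
      exact this.symm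
  · have h1 : ¬ σ.SameCycle (i0 σ h) (σ j) := by
      intro hc; exact hj (by rwa [Equiv.Perm.sameCycle_apply_right] at hc)
    rw [revCyc_apply_not σ h hj, revCyc_apply_not σ h h1]

lemma i0_revCyc (h' : (badSet (revCyc σ)).Nonempty) : i0 (revCyc σ) h' = i0 σ h := by
  simp only [i0]
  congr 1
  exact badSet_revCyc σ h

lemma revCyc_revCyc : revCyc (revCyc σ) = σ := by
  have h' : (badSet (revCyc σ)).Nonempty := by rw [badSet_revCyc σ h]; exact h
  rw [revCyc_eq (revCyc σ) h', i0_revCyc σ h h', cycleOf_revCyc σ h, revCyc_eq σ h]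
  group

lemma revCyc_ne : revCyc σ ≠ σ := by
  intro hc
  have h1 : revCyc σ (i0 σ h) = σ⁻¹ (i0 σ h) := by
    rw [revCyc_apply_of σ h (Equiv.Perm.SameCycle.refl σ _),
      cyc_inv_apply_of σ h (Equiv.Perm.SameCycle.refl σ _)]
  rw [hc] at h1
  apply bad_i0 σ h
  have := congrArg σ h1
  rwa [permApplyInvSelf] at this

end NonInv2


section Terms

variable {S M M₁ M₂ : Matrix (Fin n) (Fin n) ℝ}

lemma invTerm (hsym : ∀ i j, S i j = S j i)
    (h₁abs : ∀ i j, |M₁ i j| = S i j) (h₂abs : ∀ i j, |M₂ i j| = S i j)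
    (h₁skew : ∀ i j, M₁ j i = -M₁ i j) (h₂skew : ∀ i j, M₂ j i = -M₂ i j)
    (σ : Equiv.Perm (Fin n)) (hσ : ∀ i, σ (σ i) = i) :
    ∏ i, charmatrix M₁ (σ i) i = ∏ i, charmatrix M₂ (σ i) i := by
  rw [← Finset.prod_filter_mul_prod_filter_not Finset.univ (fun i => σ i = i),
      ← Finset.prod_filter_mul_prod_filter_not Finset.univ (fun i => σ i = i)]
  congr 1
  · apply Finset.prod_congr rfl
    intro i hi
    rw [Finset.mem_filter] at hi
    have hM1 : M₁ i i = 0 := by have := h₁skew i i; linarith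
    have hM2 : M₂ i i = 0 := by have := h₂skew i i; linarith
    rw [hi.2, charmatrix_apply_eq, charmatrix_apply_eq, hM1, hM2]
  · apply prodPair σ
    · intro i hi
      rw [Finset.mem_filter] at hi ⊢
      refine ⟨Finset.mem_univ _, ?_⟩
      rw [hσ i]
      exact fun hc => hi.2 hc.symm
    · intro i hi
      exact hσ i
    · intro i hi
      rw [Finset.mem_filter] at hi
      exact hi.2
    · intro i hi
      rw [Finset.mem_filter] at hi
      have hne : σ i ≠ i := hi.2
      rw [hσ i, charmatrix_apply_ne _ _ _ hne, charmatrix_apply_ne _ _ _ (Ne.symm hne),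
        charmatrix_apply_ne _ _ _ hne, charmatrix_apply_ne _ _ _ (Ne.symm hne),
        neg_mul_neg, neg_mul_neg, ← Polynomial.C_mul, ← Polynomial.C_mul]
      congr 1
      have q1 : M₁ (σ i) i * M₁ i (σ i) = -(S (σ i) i)^2 := by
        have e := h₁abs (σ i) i
        calc M₁ (σ i) i * M₁ i (σ i) = -(|M₁ (σ i) i|^2) := by
              rw [h₁skew i (σ i), sq_abs]; ring
        _ = -(S (σ i) i)^2 := by rw [e]
      have q2 : M₂ (σ i) i * M₂ i (σ i) = -(S (σ i) i)^2 := by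
        have e := h₂abs (σ i) i
        calc M₂ (σ i) i * M₂ i (σ i) = -(|M₂ (σ i) i|^2) := by
              rw [h₂skew i (σ i), sq_abs]; ring
        _ = -(S (σ i) i)^2 := by rw [e]
      rw [q1, q2]

end Terms


section Terms2

variable {S M : Matrix (Fin n) (Fin n) ℝ}


/-- On an even cycle there is an arc with zero weight. -/
lemma existsZeroEdge {S : Matrix (Fin n) (Fin n) ℝ}
    (hnoeven : ∀ k : ℕ, 2 < k → Even k → ∀ v : Fin k → Fin n, Function.Injective v →
      ∃ j : Fin k, S (v j) (v (finRotate k j)) = 0)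
    (σ : Equiv.Perm (Fin n)) (i₀ : Fin n) (k : ℕ) (hk2 : 2 < k) (hpar : Even k)
    (hk0 : (σ ^ k) i₀ = i₀) (hfixpow : ∀ d : ℕ, d < k → (σ ^ d) i₀ = i₀ → d = 0) :
    ∃ m : ℕ, S ((σ ^ m) i₀) (σ ((σ ^ m) i₀)) = 0 := by
  obtain ⟨l, rfl⟩ : ∃ l, k = l + 1 := ⟨k - 1, by omega⟩
  set v : Fin (l + 1) → Fin n := fun j => (σ ^ (j : ℕ)) i₀ with hv
  have hinj : Function.Injective v := by
    have key : ∀ a b : Fin (l + 1), (a : ℕ) ≤ (b : ℕ) → v a = v b → a = b := by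
      intro a b hab heq
      have h1 : σ ^ (b : ℕ) = σ ^ (a : ℕ) * σ ^ ((b : ℕ) - (a : ℕ)) := by
        rw [← pow_add]; congr 1; omega
      rw [hv] at heq
      simp only [] at heq
      rw [h1, Equiv.Perm.mul_apply] at heq
      have h2 : (σ ^ ((b : ℕ) - (a : ℕ))) i₀ = i₀ := ((σ ^ (a : ℕ)).injective heq).symm
      have hblt := b.isLt
      have h3 := hfixpow _ (by omega) h2
      exact Fin.ext (by omega)
    intro a b hab
    rcases le_total (a : ℕ) (b : ℕ) with hle | hle
    · exact key a b hle hab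
    · exact (key b a hle hab.symm).symm
  have hrot : ∀ j : Fin (l + 1), v (finRotate (l + 1) j) = σ (v j) := by
    intro j
    rw [finRotate_succ_apply]
    by_cases hlast : j = Fin.last l
    · have hval : ((j + 1 : Fin (l + 1)) : ℕ) = 0 := by
        subst hlast; simp
      rw [hv]
      simp only []
      rw [hval, hlast]
      simp only [Fin.val_last, pow_zero, Equiv.Perm.one_apply]
      have : σ ((σ ^ l) i₀) = (σ ^ (l + 1)) i₀ := by
        rw [pow_succ', Equiv.Perm.mul_apply]
      rw [this, hk0]
    · have hval : ((j + 1 : Fin (l + 1)) : ℕ) = (j : ℕ) + 1 := by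
        rw [Fin.val_add_one, if_neg hlast]
      rw [hv]
      simp only []
      rw [hval, pow_succ', Equiv.Perm.mul_apply]
  obtain ⟨j, hj⟩ := hnoeven (l + 1) hk2 hpar v hinj
  exact ⟨(j : ℕ), by rw [← hrot j]; exact hj⟩

lemma nonInvTerm (hsym : ∀ i j, S i j = S j i)
    (habs : ∀ i j, |M i j| = S i j) (hskew : ∀ i j, M j i = -M i j)
    (hnoeven : ∀ k : ℕ, 2 < k → Even k → ∀ v : Fin k → Fin n, Function.Injective v →
      ∃ j : Fin k, S (v j) (v (finRotate k j)) = 0)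
    (σ : Equiv.Perm (Fin n)) (h : (badSet σ).Nonempty) :
    Equiv.Perm.sign (revCyc σ) • ∏ i, charmatrix M (revCyc σ i) i
      = -(Equiv.Perm.sign σ • ∏ i, charmatrix M (σ i) i) := by
  classical
  have hsign : Equiv.Perm.sign (revCyc σ) = Equiv.Perm.sign σ := by
    rw [revCyc_eq σ h, _root_.map_mul, _root_.map_mul, Int.units_mul_self, one_mul]
  set i₀ := i0 σ h with hi₀
  set Ofin : Finset (Fin n) := Finset.univ.filter (σ.SameCycle i₀) with hOfin
  set k : ℕ := Ofin.card with hk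
  -- the product over the cycle picks up (-1)^k
  have hprod : ∏ i, charmatrix M (revCyc σ i) i
      = (-1 : Polynomial ℝ) ^ k * ∏ i, charmatrix M (σ i) i := by
    rw [← Finset.prod_filter_mul_prod_filter_not Finset.univ (σ.SameCycle i₀)
        (fun i => charmatrix M (revCyc σ i) i),
      ← Finset.prod_filter_mul_prod_filter_not Finset.univ (σ.SameCycle i₀)
        (fun i => charmatrix M (σ i) i)]
    have hcompl : ∏ i ∈ Finset.univ.filter (fun i => ¬ σ.SameCycle i₀ i),
        charmatrix M (revCyc σ i) i
        = ∏ i ∈ Finset.univ.filter (fun i => ¬ σ.SameCycle i₀ i), charmatrix M (σ i) i :=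
      Finset.prod_congr rfl fun i hi => by
        rw [revCyc_apply_not σ h (Finset.mem_filter.1 hi).2]
    have hOf : ∏ i ∈ Ofin, charmatrix M (revCyc σ i) i
        = ∏ i ∈ Ofin, -(charmatrix M (σ i) i) := by
      have e1 : ∏ i ∈ Ofin, charmatrix M (revCyc σ i) i
          = ∏ i ∈ Ofin, charmatrix M ((σ.cycleOf i₀)⁻¹ i) i :=
        Finset.prod_congr rfl fun i hi => by
          rw [revCyc_apply_of σ h (Finset.mem_filter.1 hi).2]
      rw [e1]
      apply Finset.prod_nbij' (fun a => (σ.cycleOf i₀)⁻¹ a) (fun b => (σ.cycleOf i₀) b)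
      · intro a ha
        rw [Finset.mem_filter] at ha ⊢
        have := ha.2
        refine ⟨Finset.mem_univ _, ?_⟩
        rw [cyc_inv_apply_of σ h ha.2, permSameCycleInvApplyRight]
        exact ha.2
      · intro a ha
        rw [Finset.mem_filter] at ha ⊢
        refine ⟨Finset.mem_univ _, ?_⟩
        rw [cyc_apply_of σ h ha.2, Equiv.Perm.sameCycle_apply_right]
        exact ha.2
      · intro a _; exact permApplyInvSelf _ _
      · intro a _; exact permInvApplySelf _ _
      · intro a ha
        rw [Finset.mem_filter] at ha
        have hb : σ.SameCycle i₀ ((σ.cycleOf i₀)⁻¹ a) := by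
          rw [cyc_inv_apply_of σ h ha.2, permSameCycleInvApplyRight]
          exact ha.2
        have hba : σ ((σ.cycleOf i₀)⁻¹ a) = a := by
          rw [← cyc_apply_of σ h hb, permApplyInvSelf]
        have hne : σ ((σ.cycleOf i₀)⁻¹ a) ≠ (σ.cycleOf i₀)⁻¹ a :=
          fun hc => fix_of_sameCycle σ h _ hb hc
        rw [hba] at hne
        -- goal : charmatrix M ((σ.cycleOf i₀)⁻¹ a) a = -(charmatrix M (σ (...)) (...))
        rw [hba, charmatrix_apply_ne _ _ _ hne,
          charmatrix_apply_ne _ _ _ (Ne.symm hne), hskew ((σ.cycleOf i₀)⁻¹ a) a]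
        simp only [map_neg, neg_neg]
    have hneg : ∏ i ∈ Ofin, -(charmatrix M (σ i) i)
        = (-1 : Polynomial ℝ) ^ k * ∏ i ∈ Ofin, charmatrix M (σ i) i := by
      rw [hk, ← Finset.prod_const, ← Finset.prod_mul_distrib]
      simp
    rw [hcompl, hOf, hneg]
    ring
  rcases Nat.even_or_odd k with hpar | hpar
  · -- even cycle: both products vanish
    have hmem1 : i₀ ∈ Ofin :=
      Finset.mem_filter.2 ⟨Finset.mem_univ _, Equiv.Perm.SameCycle.refl _ _⟩
    have hsc1 : σ.SameCycle i₀ (σ i₀) :=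
      Equiv.Perm.sameCycle_apply_right.2 (Equiv.Perm.SameCycle.refl _ _)
    have hsc2 : σ.SameCycle i₀ (σ (σ i₀)) := Equiv.Perm.sameCycle_apply_right.2 hsc1
    have hmem2 : σ i₀ ∈ Ofin := Finset.mem_filter.2 ⟨Finset.mem_univ _, hsc1⟩
    have hmem3 : σ (σ i₀) ∈ Ofin := Finset.mem_filter.2 ⟨Finset.mem_univ _, hsc2⟩
    have d1 : i₀ ≠ σ i₀ := fun hc => fix_i0 σ h hc.symm
    have d2 : i₀ ≠ σ (σ i₀) := fun hc => bad_i0 σ h hc.symm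
    have d3 : σ i₀ ≠ σ (σ i₀) := fun hc => d1 (σ.injective hc)
    have hsub3 : ({i₀, σ i₀, σ (σ i₀)} : Finset (Fin n)) ⊆ Ofin := by
      intro x hx
      simp only [Finset.mem_insert, Finset.mem_singleton] at hx
      rcases hx with rfl | rfl | rfl <;> assumption
    have hk2 : 2 < k := by
      rw [hk]
      have hc3 : ({i₀, σ i₀, σ (σ i₀)} : Finset (Fin n)).card = 3 := by
        rw [Finset.card_insert_of_notMem (by simp [d1, d2]),
          Finset.card_insert_of_notMem (by simp [d3]), Finset.card_singleton]
      have := Finset.card_le_card hsub3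
      omega
    have hfixi : σ i₀ ≠ i₀ := fix_i0 σ h
    have hcyc : (σ.cycleOf i₀).IsCycle := Equiv.Perm.isCycle_cycleOf σ hfixi
    have hsupp : (σ.cycleOf i₀).support = Ofin := by
      ext j
      rw [Equiv.Perm.mem_support_cycleOf_iff' hfixi, Finset.mem_filter]
      simp
    have hord : orderOf (σ.cycleOf i₀) = k := by
      rw [hcyc.orderOf, hsupp, hk]
    have hk0 : (σ ^ k) i₀ = i₀ := by
      rw [← Equiv.Perm.cycleOf_pow_apply_self σ i₀ k, ← hord, pow_orderOf_eq_one]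
      rfl
    have hfixpow : ∀ d : ℕ, d < k → (σ ^ d) i₀ = i₀ → d = 0 := by
      intro d hd hfix
      by_contra hd0
      have hc : ((σ.cycleOf i₀) ^ d) i₀ = i₀ := by
        rw [Equiv.Perm.cycleOf_pow_apply_self]; exact hfix
      have hx : σ.cycleOf i₀ i₀ ≠ i₀ := by
        rw [Equiv.Perm.cycleOf_apply_self]; exact hfixi
      have h1 : (σ.cycleOf i₀) ^ d = 1 := (hcyc.pow_eq_one_iff' hx).2 hc
      have h2 : orderOf (σ.cycleOf i₀) ∣ d := orderOf_dvd_of_pow_eq_one h1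
      rw [hord] at h2
      have := Nat.le_of_dvd (Nat.pos_of_ne_zero hd0) h2
      omega
    obtain ⟨m, hSm⟩ := existsZeroEdge hnoeven σ i₀ k hk2 hpar hk0 hfixpow
    set x : Fin n := (σ ^ m) i₀ with hx
    have hscx : σ.SameCycle i₀ x := ⟨(m : ℤ), by rw [zpow_natCast]⟩
    have hfixx : σ x ≠ x := fix_of_sameCycle σ h x hscx
    have hMzero : M (σ x) x = 0 := by
      have h1 : |M (σ x) x| = 0 := by rw [habs, hsym, hSm]
      exact abs_eq_zero.1 h1
    have hfac : charmatrix M (σ x) x = 0 := by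
      rw [charmatrix_apply_ne _ _ _ hfixx, hMzero, map_zero, neg_zero]
    have hzero : ∏ i, charmatrix M (σ i) i = 0 :=
      Finset.prod_eq_zero (Finset.mem_univ x) hfac
    rw [hsign, hprod, hzero, mul_zero, smul_zero, neg_zero]
  · rw [hsign, hprod, Odd.neg_one_pow hpar, neg_one_mul, smul_neg]


end Terms2


end Stmt13


/- Statement 13: Let S be nonnegative symmetric with zero diagonal whose digraph has no
directed cycle of even length greater than 2. If A and B are skew-signings of S
(|A i j| = |B i j| = S i j, with A i j * A j i < 0 and B i j * B j i < 0 on arcs), then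
A and B have the same characteristic polynomial. -/
theorem stmt_13 (n : ℕ) (S A B : Matrix (Fin n) (Fin n) ℝ)
    (hSsym : Sᵀ = S) (hSnn : ∀ i j, 0 ≤ S i j) (hSdiag : ∀ i, S i i = 0)
    (hnoeven : ∀ k : ℕ, 2 < k → Even k → ∀ v : Fin k → Fin n, Function.Injective v →
      ∃ j : Fin k, S (v j) (v (finRotate k j)) = 0)
    (hAdiag : ∀ i, A i i = 0) (hBdiag : ∀ i, B i i = 0)
    (hAabs : ∀ i j, |A i j| = S i j) (hBabs : ∀ i j, |B i j| = S i j)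
    (hAskew : ∀ i j, S i j ≠ 0 → A i j * A j i < 0)
    (hBskew : ∀ i j, S i j ≠ 0 → B i j * B j i < 0) :
    A.charpoly = B.charpoly := by
  classical
  have hsym : ∀ i j, S i j = S j i := by
    intro i j
    have h1 : Sᵀ i j = S i j := congrFun (congrFun hSsym i) j
    rw [Matrix.transpose_apply] at h1
    exact h1.symm
  have skewOf : ∀ (M : Matrix (Fin n) (Fin n) ℝ),
      (∀ i j, |M i j| = S i j) → (∀ i j, S i j ≠ 0 → M i j * M j i < 0) →
      ∀ i j, M j i = -M i j := by
    intro M habs hMskew i j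
    by_cases hS : S i j = 0
    · have h1 : M i j = 0 := abs_eq_zero.1 (by rw [habs, hS])
      have h2 : M j i = 0 := abs_eq_zero.1 (by rw [habs, ← hsym i j, hS])
      rw [h1, h2, neg_zero]
    · have hlt := hMskew i j hS
      have he : |M i j| = |M j i| := by rw [habs, habs, hsym]
      rcases abs_eq_abs.1 he with h1 | h1
      · exfalso
        rw [← h1] at hlt
        exact absurd hlt (not_lt.2 (mul_self_nonneg _))
      · rw [h1, neg_neg]
  have hAskew' := skewOf A hAabs hAskew
  have hBskew' := skewOf B hBabs hBskew
  show (charmatrix A).det = (charmatrix B).det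
  rw [Matrix.det_apply, Matrix.det_apply, ← sub_eq_zero, ← Finset.sum_sub_distrib]
  apply Finset.sum_ninvolution Stmt13.revCyc
  · intro σ
    by_cases hσ : (Stmt13.badSet σ).Nonempty
    · have hA := Stmt13.nonInvTerm hsym hAabs hAskew' hnoeven σ hσ
      have hB := Stmt13.nonInvTerm hsym hBabs hBskew' hnoeven σ hσ
      rw [hA, hB]
      ring
    · have hrev : Stmt13.revCyc σ = σ := dif_neg hσ
      have hinv : ∀ i, σ (σ i) = i := by
        intro i
        by_contra hc
        exact hσ ⟨i, Finset.mem_filter.2 ⟨Finset.mem_univ _, hc⟩⟩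
      have heq := Stmt13.invTerm hsym hAabs hBabs hAskew' hBskew' σ hinv
      rw [hrev, heq]
      ring
  · intro σ hne
    by_cases hσ : (Stmt13.badSet σ).Nonempty
    · exact Stmt13.revCyc_ne σ hσ
    · exfalso
      apply hne
      have hinv : ∀ i, σ (σ i) = i := by
        intro i
        by_contra hc
        exact hσ ⟨i, Finset.mem_filter.2 ⟨Finset.mem_univ _, hc⟩⟩
      have heq := Stmt13.invTerm hsym hAabs hBabs hAskew' hBskew' σ hinv
      rw [heq]
      ring
  · intro σ
    exact Finset.mem_univ _
  · intro σ
    by_cases hσ : (Stmt13.badSet σ).Nonempty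
    · exact Stmt13.revCyc_revCyc σ hσ
    · have hrev : Stmt13.revCyc σ = σ := dif_neg hσ
      rw [hrev, hrev]
end

section
/- Let G be a finite simple graph containing a cycle of even length. Then there exist two orientations of G whose skew-adjacency matrices have different characteristic polynomials. -/
open Matrix

/-- `S` is the skew-adjacency matrix of an orientation of the simple graph `G`. -/
def IsOrientationMatrix {n : ℕ} (G : SimpleGraph (Fin n)) (S : Matrix (Fin n) (Fin n) ℝ) :
    Prop :=
  (∀ i j, G.Adj i j → (S i j = 1 ∧ S j i = -1) ∨ (S i j = -1 ∧ S j i = 1)) ∧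
  (∀ i j, ¬G.Adj i j → S i j = 0)

/-!
Fix a cycle `C` of even length `ℓ` and describe an orientation by the signs `σ` by which it
differs from a reference orientation. Let `χ(σ) = ±1` be the product of the entries of the
skew-adjacency matrix along `C`, and expand the coefficient `c(σ)` of `X ^ (n - ℓ)` in the
characteristic polynomial as a signed sum over the permutations moving exactly `ℓ` points.
Reversing an edge of `C` flips `χ`, so in `∑_σ χ(σ) c(σ)` every permutation that misses an edge of
`C` cancels; the only permutations moving `ℓ` points that use every edge of `C` are its two
rotations. Each of them contributes `χ(σ)² = 1` for every `σ` (the backward one up to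
`(-1) ^ ℓ = 1`), and they have the same sign, so `∑_σ χ(σ) c(σ) ≠ 0`. Were `c` independent of the
orientation, the sum would be `c · ∑_σ χ(σ) = 0`.
-/

open Polynomial Finset Equiv

def Matrix.permProd {R ι : Type*} [CommRing R] [Fintype ι] [DecidableEq ι] (M : Matrix ι ι R)
    (π : Perm ι) : R :=
  ∏ i ∈ π.support, -M (π i) i

theorem Matrix.charpoly_coeff_card_sub_of_diag_eq_zero {R ι : Type*} [CommRing R] [Fintype ι]
    [DecidableEq ι] (M : Matrix ι ι R) (hM : ∀ i, M i i = 0) {ℓ : ℕ} (hℓ : ℓ ≤ Fintype.card ι) :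
    M.charpoly.coeff (Fintype.card ι - ℓ) =
      ∑ π : Perm ι with #π.support = ℓ, Perm.sign π • M.permProd π := by
  rw [charpoly, det_apply, finsetSum_coeff, sum_filter]
  refine sum_congr rfl fun π _ => ?_
  have hprod : ∏ i, M.charmatrix (π i) i
      = C (M.permProd π) * X ^ (Fintype.card ι - #π.support) := by
    rw [← prod_mul_prod_compl π.support, permProd, map_prod, ← card_compl, ← prod_const]
    congr 1
    · refine prod_congr rfl fun i hi => ?_
      rw [charmatrix_apply_ne _ _ _ (Perm.mem_support.mp hi), map_neg]
    · refine prod_congr rfl fun i hi => ?_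
      rw [Perm.notMem_support.mp (mem_compl.mp hi), charmatrix_apply_eq, hM, map_zero, sub_zero]
  have hsupp : #π.support ≤ Fintype.card ι := card_le_univ _
  rw [coeff_smul, hprod, coeff_C_mul, coeff_X_pow]
  split_ifs <;> first | omega | simp

theorem Fintype.sum_eq_zero_of_mul_right_eq_neg {G M : Type*} [Group G] [Fintype G]
    [AddCommGroup M] [IsAddTorsionFree M] {F : G → M} (τ : G) (hF : ∀ g, F (g * τ) = -F g) :
    ∑ g, F g = 0 :=
  self_eq_neg.mp <| calc
    ∑ g, F g = ∑ g, F (g * τ) := (Equiv.sum_comp (Equiv.mulRight τ) F).symm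
    _ = -∑ g, F g := by simp only [hF, sum_neg_distrib]

theorem Equiv.Perm.support_viaFintypeEmbedding {α β : Type*} [Fintype α] [DecidableEq α]
    [Fintype β] [DecidableEq β] (e : Perm α) (ι : α ↪ β) :
    (e.viaFintypeEmbedding ι).support = e.support.map ι := by
  ext y
  by_cases hy : y ∈ Set.range ι
  · obtain ⟨x, rfl⟩ := hy
    simp [Perm.mem_support, viaFintypeEmbedding_apply_image]
  · rw [Perm.mem_support, viaFintypeEmbedding_apply_notMem_range _ _ hy]
    simp only [ne_eq, not_true_eq_false, false_iff, mem_map]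
    rintro ⟨x, -, rfl⟩
    exact hy ⟨x, rfl⟩

theorem Equiv.Perm.eq_of_eqOn_support_of_card_support_le {α : Type*} [Fintype α]
    [DecidableEq α] {σ τ : Perm α} (h : ∀ x ∈ τ.support, σ x = τ x)
    (hcard : #σ.support ≤ #τ.support) : σ = τ := by
  have hsub : τ.support ⊆ σ.support := fun x hx => by
    rw [Perm.mem_support, h x hx]
    exact Perm.mem_support.mp hx
  have hsupp := eq_of_subset_of_card_le hsub hcard
  ext x
  by_cases hx : x ∈ τ.support
  · exact h x hx
  · rw [Perm.notMem_support.mp hx, Perm.notMem_support.mp (hsupp ▸ hx)]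

theorem ZMod.forall_or_forall_not_of_imp_add_one {ℓ : ℕ} [NeZero ℓ] {P : ZMod ℓ → Prop}
    (h : ∀ k, P k → P (k + 1)) : (∀ k, P k) ∨ ∀ k, ¬P k := by
  refine or_iff_not_imp_right.mpr fun hP => ?_
  obtain ⟨k₀, hk₀⟩ := not_forall_not.mp hP
  have hshift : ∀ j : ℕ, P (k₀ + j) := by
    intro j
    induction j with
    | zero => simpa using hk₀
    | succ j ih => simpa [add_assoc] using h _ ih
  intro k
  simpa [ZMod.natCast_zmod_val] using hshift (k - k₀).val

namespace SimpleGraph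

variable {V : Type*}

section Orientation

variable [LinearOrder V] {G : SimpleGraph V}

open Classical in
/-- The orientation that agrees with `<` on the edges `e` with `σ e = 1` and reverses it on the
others. -/
noncomputable def orientMatrix (G : SimpleGraph V) (σ : Sym2 V → ℤˣ) : Matrix V V ℝ :=
  of fun r c => if G.Adj r c then (if r < c then 1 else -1) * ((σ s(r, c) : ℤ) : ℝ) else 0

theorem orientMatrix_apply_swap (σ : Sym2 V → ℤˣ) (r c : V) :
    G.orientMatrix σ c r = -G.orientMatrix σ r c := by
  by_cases hadj : G.Adj r c
  · rcases hadj.ne.lt_or_gt with h | h <;>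
      simp [orientMatrix, hadj, hadj.symm, h, h.not_gt, Sym2.eq_swap]
  · have hadj' : ¬G.Adj c r := fun h => hadj h.symm
    simp [orientMatrix, hadj, hadj']

theorem orientMatrix_mul_self_of_adj (σ : Sym2 V → ℤˣ) {r c : V} (h : G.Adj r c) :
    G.orientMatrix σ r c * G.orientMatrix σ r c = 1 := by
  have hσ : ((σ s(r, c) : ℤ) : ℝ) * ((σ s(r, c) : ℤ) : ℝ) = 1 := by
    exact_mod_cast Int.units_coe_mul_self (σ s(r, c))
  simp only [orientMatrix, of_apply, if_pos h]
  split_ifs <;> linear_combination hσ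

theorem isOrientationMatrix_orientMatrix {n : ℕ} (G : SimpleGraph (Fin n))
    (σ : Sym2 (Fin n) → ℤˣ) : IsOrientationMatrix G (G.orientMatrix σ) := by
  refine ⟨fun r c h => ?_, fun r c h => by simp [orientMatrix, h]⟩
  rw [orientMatrix_apply_swap σ r c]
  have hsq := orientMatrix_mul_self_of_adj σ h
  have hsign : G.orientMatrix σ r c = 1 ∨ G.orientMatrix σ r c = -1 := by
    rwa [← sq_eq_one_iff, sq]
  rcases hsign with h | h <;> simp [h]

theorem orientMatrix_mul_mulSingle_apply (σ : Sym2 V → ℤˣ) (e : Sym2 V) (r c : V) :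
    G.orientMatrix (σ * Pi.mulSingle e (-1)) r c =
      if s(r, c) = e then -G.orientMatrix σ r c else G.orientMatrix σ r c := by
  simp only [orientMatrix, of_apply, Pi.mul_apply, Pi.mulSingle_apply]
  split_ifs <;> simp

theorem orientMatrix_apply_self (σ : Sym2 V → ℤˣ) (r : V) : G.orientMatrix σ r r = 0 := by
  simp [orientMatrix]

theorem permProd_orientMatrix_mul_mulSingle [Fintype V] (σ : Sym2 V → ℤˣ) {π : Perm V} {p q : V}
    (hp : π p ≠ q) (hq : π q ≠ p) :
    (G.orientMatrix (σ * Pi.mulSingle s(p, q) (-1))).permProd π =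
      (G.orientMatrix σ).permProd π := by
  refine prod_congr rfl fun i _ => ?_
  rw [orientMatrix_mul_mulSingle_apply, if_neg]
  intro h
  rcases Sym2.eq_iff.mp h with ⟨h₁, rfl⟩ | ⟨h₁, rfl⟩
  exacts [hq h₁, hp h₁]

end Orientation

/-- `(2 : ZMod ℓ) ≠ 0` excludes `ℓ = 2`, a single edge traversed back and forth. -/
structure IsCycleMap (G : SimpleGraph V) {ℓ : ℕ} (f : ZMod ℓ → V) : Prop where
  injective : Function.Injective f
  adj : ∀ k, G.Adj (f k) (f (k + 1))
  two_ne_zero : (2 : ZMod ℓ) ≠ 0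

namespace IsCycleMap

variable {G : SimpleGraph V} {ℓ : ℕ} {f : ZMod ℓ → V} (hf : G.IsCycleMap f)
include hf

theorem one_ne_zero : (1 : ZMod ℓ) ≠ 0 := fun h => (hf.adj 0).ne (by rw [h, zero_add])

variable [DecidableEq V] [NeZero ℓ]

def rotation (d : ZMod ℓ) : Perm V :=
  (Equiv.addRight d).viaFintypeEmbedding ⟨f, hf.injective⟩

theorem rotation_apply (d k : ZMod ℓ) : hf.rotation d (f k) = f (k + d) :=
  Perm.viaFintypeEmbedding_apply_image _ ⟨f, hf.injective⟩ k

theorem support_rotation [Fintype V] {d : ZMod ℓ} (hd : d ≠ 0) :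
    (hf.rotation d).support = univ.map ⟨f, hf.injective⟩ := by
  rw [rotation, Perm.support_viaFintypeEmbedding]
  congr
  ext k
  simpa [Perm.mem_support] using hd

theorem card_support_rotation [Fintype V] {d : ZMod ℓ} (hd : d ≠ 0) :
    #(hf.rotation d).support = ℓ := by
  rw [hf.support_rotation hd, card_map, card_univ, ZMod.card]

theorem sign_rotation_neg_one [Fintype V] :
    Perm.sign (hf.rotation (-1)) = Perm.sign (hf.rotation 1) := by
  rw [rotation, rotation, Perm.viaFintypeEmbedding_sign, Perm.viaFintypeEmbedding_sign,
    ← neg_addRight, Perm.sign_inv]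

theorem rotation_one_ne_rotation_neg_one : hf.rotation 1 ≠ hf.rotation (-1) := fun h => by
  have h0 := congrArg (· (f 0)) h
  simp only [rotation_apply, zero_add] at h0
  exact hf.two_ne_zero (by linear_combination hf.injective h0)

theorem eq_rotation_of_card_support [Fintype V] {π : Perm V} (hπ : #π.support = ℓ)
    (huse : ∀ k, π (f k) = f (k + 1) ∨ π (f (k + 1)) = f k) :
    π = hf.rotation 1 ∨ π = hf.rotation (-1) := by
  have hforward : ∀ k, π (f k) = f (k + 1) → π (f (k + 1)) = f (k + 1 + 1) := by
    intro k hk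
    refine (huse (k + 1)).resolve_right fun hback => hf.two_ne_zero ?_
    have := hf.injective (π.injective (hback.trans hk.symm))
    linear_combination this
  have heq {d : ZMod ℓ} (hd : d ≠ 0) (hπd : ∀ k, π (f k) = f (k + d)) : π = hf.rotation d := by
    refine Perm.eq_of_eqOn_support_of_card_support_le (fun x hx => ?_) ?_
    · obtain ⟨k, -, rfl⟩ := mem_map.mp (hf.support_rotation hd ▸ hx)
      exact (hπd k).trans (hf.rotation_apply d k).symm
    · rw [hπ, hf.card_support_rotation hd]
  rcases ZMod.forall_or_forall_not_of_imp_add_one hforward with hfwd | hbwd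
  · exact Or.inl (heq hf.one_ne_zero hfwd)
  · refine Or.inr (heq (neg_ne_zero.mpr hf.one_ne_zero) fun k => ?_)
    simpa [← sub_eq_add_neg] using (huse (k - 1)).resolve_left (hbwd (k - 1))

end IsCycleMap

section CycleProd

variable [LinearOrder V] {G : SimpleGraph V} {ℓ : ℕ} [NeZero ℓ]

variable (G) in
noncomputable def cycleProd (f : ZMod ℓ → V) (σ : Sym2 V → ℤˣ) : ℝ :=
  ∏ k, G.orientMatrix σ (f k) (f (k + 1))

namespace IsCycleMap

variable {f : ZMod ℓ → V} (hf : G.IsCycleMap f)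
include hf

theorem cycleProd_mul_self (σ : Sym2 V → ℤˣ) : G.cycleProd f σ * G.cycleProd f σ = 1 := by
  rw [cycleProd, ← prod_mul_distrib]
  exact prod_eq_one fun k _ => orientMatrix_mul_self_of_adj σ (hf.adj k)

theorem cycleProd_mul_mulSingle (σ : Sym2 V → ℤˣ) (j : ZMod ℓ) :
    G.cycleProd f (σ * Pi.mulSingle s(f j, f (j + 1)) (-1)) = -G.cycleProd f σ := by
  have hother : ∀ k ∈ univ.erase j, s(f k, f (k + 1)) ≠ s(f j, f (j + 1)) := by
    intro k hk hkj
    rcases Sym2.eq_iff.mp hkj with ⟨h, -⟩ | ⟨h₁, h₂⟩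
    · exact (mem_erase.mp hk).1 (hf.injective h)
    · exact hf.two_ne_zero (by linear_combination hf.injective h₂ - hf.injective h₁)
  rw [cycleProd, cycleProd, ← mul_prod_erase _ _ (mem_univ j), ← mul_prod_erase _ _ (mem_univ j),
    orientMatrix_mul_mulSingle_apply, if_pos rfl, neg_mul,
    prod_congr rfl fun k hk => by rw [orientMatrix_mul_mulSingle_apply, if_neg (hother k hk)]]

variable [Fintype V]

theorem sum_cycleProd_mul_eq_zero (j : ZMod ℓ) (T : (Sym2 V → ℤˣ) → ℝ)
    (hT : ∀ σ, T (σ * Pi.mulSingle s(f j, f (j + 1)) (-1)) = T σ) :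
    ∑ σ, G.cycleProd f σ * T σ = 0 :=
  Fintype.sum_eq_zero_of_mul_right_eq_neg (Pi.mulSingle s(f j, f (j + 1)) (-1)) fun σ => by
    rw [hT, hf.cycleProd_mul_mulSingle, neg_mul]

theorem permProd_rotation (M : Matrix V V ℝ) {d : ZMod ℓ} (hd : d ≠ 0) :
    M.permProd (hf.rotation d) = ∏ k, -M (f (k + d)) (f k) := by
  rw [permProd, hf.support_rotation hd, prod_map]
  exact prod_congr rfl fun k _ => by rw [Function.Embedding.coeFn_mk, hf.rotation_apply]

theorem cycleProd_mul_permProd_rotation_one (σ : Sym2 V → ℤˣ) :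
    G.cycleProd f σ * (G.orientMatrix σ).permProd (hf.rotation 1) = 1 := by
  have hforth : (G.orientMatrix σ).permProd (hf.rotation 1) = G.cycleProd f σ := by
    rw [hf.permProd_rotation _ hf.one_ne_zero, cycleProd]
    exact prod_congr rfl fun k _ => by rw [orientMatrix_apply_swap σ (f k), neg_neg]
  rw [hforth, hf.cycleProd_mul_self σ]

/-- Running around an even cycle backwards picks up the sign `(-1) ^ ℓ = 1`. -/
theorem cycleProd_mul_permProd_rotation_neg_one (hℓ : Even ℓ) (σ : Sym2 V → ℤˣ) :
    G.cycleProd f σ * (G.orientMatrix σ).permProd (hf.rotation (-1)) = 1 := by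
  have hback : (G.orientMatrix σ).permProd (hf.rotation (-1)) = G.cycleProd f σ := by
    have hshift := Equiv.prod_comp (Equiv.addRight (-1))
      fun k => -G.orientMatrix σ (f k) (f (k + 1))
    simp only [coe_addRight, neg_add_cancel_right] at hshift
    rw [hf.permProd_rotation _ (neg_ne_zero.mpr hf.one_ne_zero), hshift, prod_neg, card_univ,
      ZMod.card, hℓ.neg_one_pow, one_mul, cycleProd]
  rw [hback, hf.cycleProd_mul_self σ]

theorem sum_cycleProd_mul_permProd_eq_zero {π : Perm V} (hπ : #π.support = ℓ)
    (h₁ : π ≠ hf.rotation 1) (h₂ : π ≠ hf.rotation (-1)) :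
    ∑ σ, G.cycleProd f σ * (G.orientMatrix σ).permProd π = 0 := by
  have hmiss : ∃ j, π (f j) ≠ f (j + 1) ∧ π (f (j + 1)) ≠ f j := by
    by_contra! huse
    exact (hf.eq_rotation_of_card_support hπ fun k => or_iff_not_imp_left.mpr (huse k)).elim h₁ h₂
  obtain ⟨j, hj₁, hj₂⟩ := hmiss
  exact hf.sum_cycleProd_mul_eq_zero j _ fun σ => permProd_orientMatrix_mul_mulSingle σ hj₁ hj₂

theorem sum_cycleProd_mul_charpoly_coeff (hℓ : Even ℓ) :
    ∑ σ, G.cycleProd f σ * (G.orientMatrix σ).charpoly.coeff (Fintype.card V - ℓ) =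
      2 • Perm.sign (hf.rotation 1) • (Fintype.card (Sym2 V → ℤˣ) : ℝ) := by
  have hℓV : ℓ ≤ Fintype.card V := by simpa using Fintype.card_le_of_injective f hf.injective
  have hsub : {hf.rotation 1, hf.rotation (-1)} ⊆ ({π | #π.support = ℓ} : Finset (Perm V)) := by
    simp [insert_subset_iff, hf.card_support_rotation hf.one_ne_zero,
      hf.card_support_rotation (neg_ne_zero.mpr hf.one_ne_zero)]
  simp_rw [charpoly_coeff_card_sub_of_diag_eq_zero _ (orientMatrix_apply_self _) hℓV, mul_sum,
    mul_smul_comm]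
  rw [sum_comm]
  simp_rw [← smul_sum]
  rw [← sum_subset hsub fun π hπ hπrot => ?_, sum_pair hf.rotation_one_ne_rotation_neg_one,
    hf.sign_rotation_neg_one, two_nsmul]
  · simp [hf.cycleProd_mul_permProd_rotation_one, hf.cycleProd_mul_permProd_rotation_neg_one hℓ]
  · obtain ⟨hπ₁, hπ₂⟩ : π ≠ hf.rotation 1 ∧ π ≠ hf.rotation (-1) := by simpa using hπrot
    rw [hf.sum_cycleProd_mul_permProd_eq_zero (mem_filter.mp hπ).2 hπ₁ hπ₂, smul_zero]

theorem exists_charpoly_orientMatrix_ne (hℓ : Even ℓ) :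
    ∃ σ, (G.orientMatrix σ).charpoly ≠ (G.orientMatrix 1).charpoly := by
  by_contra! hconst
  have hzero := hf.sum_cycleProd_mul_eq_zero 0
    (fun σ => (G.orientMatrix σ).charpoly.coeff (Fintype.card V - ℓ))
    fun σ => by rw [hconst (σ * _), hconst σ]
  rw [hf.sum_cycleProd_mul_charpoly_coeff hℓ, two_nsmul_eq_zero, smul_eq_zero_iff_eq] at hzero
  exact Fintype.card_ne_zero (by exact_mod_cast hzero)

end IsCycleMap

end CycleProd

theorem Walk.IsCycle.isCycleMap_getVert {G : SimpleGraph V} {u : V}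
    {w : G.Walk u u} (hw : w.IsCycle) : G.IsCycleMap fun k : ZMod w.length => w.getVert k.val := by
  have hℓ := hw.three_le_length
  have : NeZero w.length := ⟨by omega⟩
  refine ⟨fun a b hab => ZMod.val_injective _ ?_, fun k => ?_, fun h2 => ?_⟩
  · have hle (k : ZMod w.length) : k.val ≤ w.length - 1 := by have := k.val_lt; omega
    exact hw.getVert_injOn' (hle a) (hle b) hab
  · have hk := k.val_lt
    have hsucc : w.getVert (k + 1).val = w.getVert (k.val + 1) := by
      rw [ZMod.val_add, ZMod.val_one'' (by omega)]
      rcases (show k.val + 1 ≤ w.length from hk).lt_or_eq with h | h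
      · rw [Nat.mod_eq_of_lt h]
      · rw [h, Nat.mod_self, getVert_zero, getVert_length]
    rw [hsucc]
    exact w.adj_getVert_succ hk
  · have := Nat.le_of_dvd two_pos ((ZMod.natCast_eq_zero_iff 2 _).mp (by exact_mod_cast h2))
    omega

end SimpleGraph

open SimpleGraph

theorem stmt_15 (n : ℕ) (G : SimpleGraph (Fin n))
    (heven : ∃ (u : Fin n) (w : G.Walk u u), w.IsCycle ∧ Even w.length) :
    ∃ S₁ S₂ : Matrix (Fin n) (Fin n) ℝ,
      IsOrientationMatrix G S₁ ∧ IsOrientationMatrix G S₂ ∧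
        S₁.charpoly ≠ S₂.charpoly := by
  obtain ⟨u, w, hw, hℓ⟩ := heven
  have : NeZero w.length := ⟨by have := hw.three_le_length; omega⟩
  obtain ⟨σ, hσ⟩ := hw.isCycleMap_getVert.exists_charpoly_orientMatrix_ne hℓ
  exact ⟨_, _, isOrientationMatrix_orientMatrix G σ, isOrientationMatrix_orientMatrix G 1, hσ⟩
end

section
/- Let (D, ω) be a positive weighted loopless symmetric digraph on n vertices with weighted adjacency matrix A. Suppose every skew-signing ω′ of (D, ω) yields the same characteristic polynomial for A(D, ω′). Then A is cycle-symmetric: for every sequence of distinct indices i₁,...,i_k, A(i₁,i₂)···A(i_k,i₁) = A(i₁,i_k)···A(i₂,i₁). -/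
set_option linter.unusedSectionVars false
set_option maxHeartbeats 1000000

open Polynomial Finset
open Fin.CommRing


open Matrix

/-- `B` is the weighted adjacency matrix of a skew-signing of the positive weighted
loopless symmetric digraph with weighted adjacency matrix `A`. -/
def IsSkewSigning {n : ℕ} (A B : Matrix (Fin n) (Fin n) ℝ) : Prop :=
  (∀ i j, |B i j| = A i j) ∧ (∀ i j, A i j ≠ 0 → B i j * B j i < 0)

namespace Stmt16

variable {n k : ℕ}

/-! ### charpoly coefficient formula -/

lemma charpoly_coeff_eq (M : Matrix (Fin n) (Fin n) ℝ) (hd : ∀ i, M i i = 0) (r : ℕ) :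
    M.charpoly.coeff r = ∑ σ : Equiv.Perm (Fin n),
      if (Finset.univ.filter fun i => σ i = i).card = r then
        ((Equiv.Perm.sign σ : ℤ) : ℝ) *
          ∏ i ∈ Finset.univ.filter (fun i => ¬ σ i = i), (-M (σ i) i)
      else 0 := by
  rw [Matrix.charpoly, Matrix.det_apply, Polynomial.finset_sum_coeff]
  refine Finset.sum_congr rfl fun σ _ => ?_
  have h1 : (∏ i ∈ Finset.univ.filter (fun i => σ i = i), charmatrix M (σ i) i) =
      X ^ ((Finset.univ.filter fun i => σ i = i).card) := by
    rw [Finset.prod_congr rfl (fun i hi => ?_), Finset.prod_const]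
    rw [Finset.mem_filter] at hi
    rw [hi.2, charmatrix_apply_eq, hd, map_zero, sub_zero]
  have h2 : (∏ i ∈ Finset.univ.filter (fun i => ¬ σ i = i), charmatrix M (σ i) i) =
      C (∏ i ∈ Finset.univ.filter (fun i => ¬ σ i = i), (-M (σ i) i)) := by
    rw [map_prod]
    refine Finset.prod_congr rfl fun i hi => ?_
    rw [Finset.mem_filter] at hi
    rw [charmatrix_apply_ne _ _ _ hi.2, map_neg]
  have hp : (∏ i, charmatrix M (σ i) i) =
      X ^ ((Finset.univ.filter fun i => σ i = i).card) *
        C (∏ i ∈ Finset.univ.filter (fun i => ¬ σ i = i), (-M (σ i) i)) := by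
    rw [← Finset.prod_filter_mul_prod_filter_not Finset.univ (fun i => σ i = i), h1, h2]
  rw [hp, Polynomial.coeff_smul]
  rw [mul_comm, Polynomial.coeff_C_mul, Polynomial.coeff_X_pow]
  by_cases hc : (Finset.univ.filter fun i => σ i = i).card = r <;>
    rcases Int.units_eq_one_or (Equiv.Perm.sign σ) with h | h <;>
    simp [hc, h, Units.smul_def, eq_comm]

/-! ### signing matrices -/

def B0 (A : Matrix (Fin n) (Fin n) ℝ) : Matrix (Fin n) (Fin n) ℝ :=
  fun i j => if i ≤ j then A i j else -A i j

def edg (v : Fin k → Fin n) (t : Fin k) : Finset (Fin n) := {v t, v (finRotate k t)}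

def msign (v : Fin k → Fin n) (s : Fin k → Bool) (i j : Fin n) : ℝ :=
  ∏ t : Fin k, if s t ∧ ({i, j} : Finset (Fin n)) = edg v t then -1 else 1

def BS (A : Matrix (Fin n) (Fin n) ℝ) (v : Fin k → Fin n) (s : Fin k → Bool) :
    Matrix (Fin n) (Fin n) ℝ :=
  fun i j => msign v s i j * B0 A i j

def NE (v : Fin k → Fin n) (σ : Equiv.Perm (Fin n)) (t : Fin k) : ℕ :=
  (Finset.univ.filter fun i => ¬ σ i = i ∧ ({σ i, i} : Finset (Fin n)) = edg v t).card

variable {A : Matrix (Fin n) (Fin n) ℝ}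

lemma B0_mul_neg (hdiag : ∀ i, A i i = 0) (hnn : ∀ i j, 0 ≤ A i j)
    (hsymm : ∀ i j, A i j ≠ 0 ↔ A j i ≠ 0) (i j : Fin n) (h : A i j ≠ 0) :
    B0 A i j * B0 A j i < 0 := by
  have hji : A j i ≠ 0 := (hsymm i j).mp h
  have hij : 0 < A i j := lt_of_le_of_ne (hnn i j) (Ne.symm h)
  have hji' : 0 < A j i := lt_of_le_of_ne (hnn j i) (Ne.symm hji)
  have hne : i ≠ j := by rintro rfl; exact h (hdiag i)
  rcases lt_or_gt_of_ne hne with hlt | hlt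
  · simp only [B0, if_pos hlt.le, if_neg (not_le.mpr hlt)]
    exact mul_neg_of_pos_of_neg hij (neg_neg_of_pos hji')
  · simp only [B0, if_neg (not_le.mpr hlt), if_pos hlt.le]
    exact mul_neg_of_neg_of_pos (neg_neg_of_pos hij) hji'

lemma B0_abs (hnn : ∀ i j, 0 ≤ A i j) (i j : Fin n) : |B0 A i j| = A i j := by
  unfold B0; split_ifs <;> simp [abs_of_nonneg, hnn i j]

lemma msign_abs (v : Fin k → Fin n) (s : Fin k → Bool) (i j : Fin n) :
    |msign v s i j| = 1 := by
  unfold msign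
  rw [Finset.abs_prod]
  rw [Finset.prod_eq_one]
  intro t _
  split_ifs <;> simp

lemma msign_symm (v : Fin k → Fin n) (s : Fin k → Bool) (i j : Fin n) :
    msign v s i j = msign v s j i := by
  unfold msign
  simp_rw [Finset.pair_comm i j]

lemma msign_sq (v : Fin k → Fin n) (s : Fin k → Bool) (i j : Fin n) :
    msign v s i j * msign v s i j = 1 := by
  have := msign_abs v s i j
  rcases abs_eq (by norm_num : (0:ℝ) ≤ 1) |>.mp this with h | h <;> rw [h] <;> norm_num

lemma BS_skew (hdiag : ∀ i, A i i = 0) (hnn : ∀ i j, 0 ≤ A i j)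
    (hsymm : ∀ i j, A i j ≠ 0 ↔ A j i ≠ 0) (v : Fin k → Fin n) (s : Fin k → Bool) :
    IsSkewSigning A (BS A v s) := by
  constructor
  · intro i j
    simp only [BS]
    rw [abs_mul, msign_abs, one_mul, B0_abs hnn]
  · intro i j h
    have heq : BS A v s i j * BS A v s j i = B0 A i j * B0 A j i := by
      simp only [BS]
      have : msign v s i j * B0 A i j * (msign v s j i * B0 A j i)
          = (msign v s i j * msign v s j i) * (B0 A i j * B0 A j i) := by ring
      rw [this, ← msign_symm, msign_sq, one_mul]
    rw [heq]
    exact B0_mul_neg hdiag hnn hsymm i j h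

lemma BS_diag (hdiag : ∀ i, A i i = 0) (v : Fin k → Fin n) (s : Fin k → Bool) (i : Fin n) :
    BS A v s i i = 0 := by
  simp [BS, B0, hdiag]

/-! ### basic Fin k facts -/

section Cyc

variable [NeZero k] (v : Fin k → Fin n)

lemma hrot (hk : 3 ≤ k) : ∀ j : Fin k, finRotate k j = j + 1 := by
  obtain ⟨m, rfl⟩ : ∃ m, k = m + 1 := ⟨k - 1, by omega⟩
  intro j; exact finRotate_succ_apply j

lemma hone (hk : 3 ≤ k) : (1 : Fin k) ≠ 0 := by
  rw [← Nat.cast_one (R := Fin k)]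
  intro h
  rw [Fin.ext_iff, Fin.val_natCast, Fin.val_zero, Nat.mod_eq_of_lt (show 1 < k by omega)] at h
  omega

lemma htwo (hk : 3 ≤ k) : (2 : Fin k) ≠ 0 := by
  rw [← Nat.cast_two (R := Fin k)]
  intro h
  rw [Fin.ext_iff, Fin.val_natCast, Fin.val_zero, Nat.mod_eq_of_lt (show 2 < k by omega)] at h
  omega

lemma add_one_ne (hk : 3 ≤ k) (j : Fin k) : j + 1 ≠ j := by
  intro h
  have h2 := congrArg (· - j) h
  simp only [sub_self] at h2
  rw [add_comm, add_sub_cancel_right] at h2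
  exact hone hk h2

lemma add_two_ne (hk : 3 ≤ k) (j : Fin k) : j + 2 ≠ j := by
  intro h
  have h2 := congrArg (· - j) h
  simp only [sub_self] at h2
  rw [add_comm, add_sub_cancel_right] at h2
  exact htwo hk h2

lemma mem_edg (hk : 3 ≤ k) {x : Fin n} {t : Fin k} :
    x ∈ edg v t ↔ x = v t ∨ x = v (t + 1) := by
  rw [edg, hrot hk, Finset.mem_insert, Finset.mem_singleton]

lemma edg_inj (hk : 3 ≤ k) (hv : Function.Injective v) {t u : Fin k}
    (h : edg v t = edg v u) : t = u := by
  have h1 : v t ∈ edg v u := by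
    rw [← h, mem_edg v hk]; left; rfl
  have h2 : v (t + 1) ∈ edg v u := by
    rw [← h, mem_edg v hk]; right; rfl
  rw [mem_edg v hk] at h1 h2
  rcases h1 with h1 | h1 <;> rcases h2 with h2 | h2
  · exact hv h1
  · exact hv h1
  · exfalso
    have ht := hv h1; have ht2 := hv h2
    have h3 : u + 1 + 1 = u := by rw [← ht, ht2]
    rw [add_assoc, one_add_one_eq_two] at h3
    exact add_two_ne hk u h3
  · have ht := hv h1; have ht2 := hv h2
    exfalso
    have htu : t = u := by rwa [add_left_inj] at ht2
    rw [htu] at ht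
    exact add_one_ne hk u ht.symm

variable (hv : Function.Injective v)

noncomputable def vEquiv : Fin k ≃ {x : Fin n // x ∈ Finset.image v Finset.univ} :=
  Equiv.ofBijective (fun t => ⟨v t, Finset.mem_image_of_mem v (Finset.mem_univ t)⟩)
    ⟨fun a b hab => hv (congrArg Subtype.val hab), by
      rintro ⟨x, hx⟩
      obtain ⟨t, -, rfl⟩ := Finset.mem_image.mp hx
      exact ⟨t, rfl⟩⟩

noncomputable def cyc : Equiv.Perm (Fin n) := (finRotate k).extendDomain (vEquiv v hv)

lemma cyc_apply_v (t : Fin k) : cyc v hv (v t) = v (finRotate k t) := by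
  have h := Equiv.Perm.extendDomain_apply_image (finRotate k) (vEquiv v hv) t
  exact h

lemma cyc_apply_v' (hk : 3 ≤ k) (t : Fin k) : cyc v hv (v t) = v (t + 1) := by
  rw [cyc_apply_v, hrot hk]

lemma cyc_apply_not {x : Fin n} (hx : x ∉ Finset.image v Finset.univ) : cyc v hv x = x :=
  Equiv.Perm.extendDomain_apply_not_subtype _ _ hx

lemma cyc_inv_apply_v (t : Fin k) : (cyc v hv)⁻¹ (v (finRotate k t)) = v t := by
  rw [← cyc_apply_v v hv t, Equiv.Perm.inv_def, Equiv.symm_apply_apply]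

lemma cyc_inv_apply_v' (hk : 3 ≤ k) (j : Fin k) : (cyc v hv)⁻¹ (v j) = v (j - 1) := by
  have := cyc_inv_apply_v v hv (j - 1)
  rwa [hrot hk, sub_add_cancel] at this

lemma cyc_inv_apply_not {x : Fin n} (hx : x ∉ Finset.image v Finset.univ) :
    (cyc v hv)⁻¹ x = x := by
  rw [cyc, Equiv.Perm.extendDomain_inv]
  exact Equiv.Perm.extendDomain_apply_not_subtype _ _ hx

lemma moved_cyc (hk : 3 ≤ k) :
    (Finset.univ.filter fun i => ¬ cyc v hv i = i) = Finset.univ.image v := by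
  ext i
  simp only [Finset.mem_filter, Finset.mem_univ, true_and]
  constructor
  · intro h
    by_contra hx
    exact h (cyc_apply_not v hv hx)
  · intro h
    obtain ⟨j, -, rfl⟩ := Finset.mem_image.mp h
    rw [cyc_apply_v' v hv hk]
    intro hc
    exact add_one_ne hk j (hv hc)

lemma moved_inv (σ : Equiv.Perm (Fin n)) :
    (Finset.univ.filter fun i => ¬ σ⁻¹ i = i) = Finset.univ.filter fun i => ¬ σ i = i := by
  ext i
  simp only [Finset.mem_filter, Finset.mem_univ, true_and]
  rw [Equiv.Perm.inv_def, Equiv.symm_apply_eq]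
  constructor
  · intro h hc; exact h hc.symm
  · intro h hc; exact h hc.symm

lemma cyc_ne_inv (hk : 3 ≤ k) : cyc v hv ≠ (cyc v hv)⁻¹ := by
  intro h
  have h1 : cyc v hv (v 0) = v 1 := by rw [cyc_apply_v' v hv hk, zero_add]
  have h2 : (cyc v hv)⁻¹ (v 0) = v (0 - 1) := cyc_inv_apply_v' v hv hk 0
  rw [← h, h1] at h2
  have := hv h2
  rw [zero_sub] at this
  apply htwo hk
  have := congrArg (· + 1) this
  simp only [neg_add_cancel] at this
  rw [one_add_one_eq_two] at this
  exact this

lemma Ecyc (hk : 3 ≤ k) (t : Fin k) :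
    (Finset.univ.filter fun i =>
      ¬ cyc v hv i = i ∧ ({cyc v hv i, i} : Finset (Fin n)) = edg v t) = {v t} := by
  ext i
  simp only [Finset.mem_filter, Finset.mem_univ, true_and, Finset.mem_singleton]
  constructor
  · rintro ⟨hmov, hpair⟩
    have hi : i ∈ Finset.univ.image v := by
      by_contra hx
      exact hmov (cyc_apply_not v hv hx)
    obtain ⟨u, -, rfl⟩ := Finset.mem_image.mp hi
    rw [cyc_apply_v' v hv hk] at hpair
    have hu : v u ∈ edg v t := by
      rw [← hpair]
      exact Finset.mem_insert_of_mem (Finset.mem_singleton_self _)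
    rw [mem_edg v hk] at hu
    rcases hu with hu | hu
    · rw [hv hu]
    · exfalso
      have hu1 : v (u + 1) ∈ edg v t := by
        rw [← hpair]; exact Finset.mem_insert_self _ _
      rw [mem_edg v hk] at hu1
      have hut := hv hu
      rcases hu1 with h1 | h1
      · have := hv h1
        rw [hut] at this
        rw [add_assoc, one_add_one_eq_two] at this
        exact add_two_ne hk t this
      · have := hv h1
        rw [add_left_inj] at this
        rw [this] at hut
        exact add_one_ne hk t hut.symm
  · rintro rfl
    constructor
    · rw [cyc_apply_v' v hv hk]
      intro hc
      exact add_one_ne hk t (hv hc)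
    · rw [cyc_apply_v' v hv hk, edg, hrot hk, Finset.pair_comm]

lemma Ecyc_inv (hk : 3 ≤ k) (t : Fin k) :
    (Finset.univ.filter fun i =>
      ¬ (cyc v hv)⁻¹ i = i ∧ ({(cyc v hv)⁻¹ i, i} : Finset (Fin n)) = edg v t)
      = {v (t + 1)} := by
  ext i
  simp only [Finset.mem_filter, Finset.mem_univ, true_and, Finset.mem_singleton]
  constructor
  · rintro ⟨hmov, hpair⟩
    have hi : i ∈ Finset.univ.image v := by
      by_contra hx
      exact hmov (cyc_inv_apply_not v hv hx)
    obtain ⟨u, -, rfl⟩ := Finset.mem_image.mp hi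
    rw [cyc_inv_apply_v' v hv hk] at hpair
    have hu : v u ∈ edg v t := by
      rw [← hpair]
      exact Finset.mem_insert_of_mem (Finset.mem_singleton_self _)
    rw [mem_edg v hk] at hu
    rcases hu with hu | hu
    · exfalso
      have hu1 : v (u - 1) ∈ edg v t := by
        rw [← hpair]; exact Finset.mem_insert_self _ _
      rw [mem_edg v hk] at hu1
      have hut := hv hu
      rcases hu1 with h1 | h1
      · have h2 := hv h1
        rw [hut] at h2
        have := congrArg (· + 1) h2
        simp only [sub_add_cancel] at this
        exact add_one_ne hk t this.symm
      · have h2 := hv h1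
        rw [hut] at h2
        have := congrArg (· + 1) h2
        simp only [sub_add_cancel] at this
        rw [add_assoc, one_add_one_eq_two] at this
        exact (add_two_ne hk t this.symm)
    · rw [hv hu]
  · rintro rfl
    constructor
    · rw [cyc_inv_apply_v' v hv hk, add_sub_cancel_right]
      intro hc
      exact add_one_ne hk t (hv hc).symm
    · rw [cyc_inv_apply_v' v hv hk, add_sub_cancel_right, edg, hrot hk]

lemma classify (hk : 3 ≤ k) (σ : Equiv.Perm (Fin n))
    (hcard : (Finset.univ.filter fun i => ¬ σ i = i).card = k)
    (hodd : ∀ t : Fin k, Odd (NE v σ t)) :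
    σ = cyc v hv ∨ σ = (cyc v hv)⁻¹ := by
  classical
  set Mov := Finset.univ.filter fun i => ¬ σ i = i with hMov
  set E : Fin k → Finset (Fin n) := fun t => Finset.univ.filter fun i =>
      ¬ σ i = i ∧ ({σ i, i} : Finset (Fin n)) = edg v t with hE
  have hodd' : ∀ t, Odd ((E t).card) := hodd
  have hEsub : ∀ t, E t ⊆ Mov := by
    intro t i hi
    simp only [hE, Finset.mem_filter] at hi
    simp only [hMov, Finset.mem_filter]
    exact ⟨hi.1, hi.2.1⟩
  have hdisj : (↑(Finset.univ : Finset (Fin k)) : Set (Fin k)).PairwiseDisjoint E := by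
    intro t _ u _ htu
    rw [Function.onFun, Finset.disjoint_left]
    intro i hit hiu
    simp only [hE, Finset.mem_filter] at hit hiu
    exact htu (edg_inj v hk hv (hit.2.2 ▸ hiu.2.2))
  have hcardbU : (Finset.univ.biUnion E).card = ∑ t, (E t).card :=
    Finset.card_biUnion hdisj
  have hsum : ∑ t, (E t).card ≤ k := by
    rw [← hcardbU]
    exact le_trans (Finset.card_le_card (Finset.biUnion_subset.mpr fun t _ => hEsub t)) hcard.le
  have hone' : ∀ t, 1 ≤ (E t).card := fun t => (hodd' t).pos
  have hEcard : ∀ t, (E t).card = 1 := by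
    by_contra hcon
    push_neg at hcon
    obtain ⟨t0, ht0⟩ := hcon
    have hlt : ∑ t : Fin k, 1 < ∑ t, (E t).card :=
      Finset.sum_lt_sum (fun i _ => hone' i)
        ⟨t0, Finset.mem_univ _, by have := hone' t0; omega⟩
    simp only [Finset.sum_const, Finset.card_univ, Fintype.card_fin, smul_eq_mul, mul_one] at hlt
    omega
  have hbU : Finset.univ.biUnion E = Mov := by
    apply Finset.eq_of_subset_of_card_le (Finset.biUnion_subset.mpr fun t _ => hEsub t)
    rw [hcardbU, hcard]
    simp [hEcard]
  have hmem : ∀ i, ¬ σ i = i → ∃ t, ({σ i, i} : Finset (Fin n)) = edg v t := by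
    intro i hi
    have : i ∈ Mov := by simp [hMov, hi]
    rw [← hbU, Finset.mem_biUnion] at this
    obtain ⟨t, -, ht⟩ := this
    simp only [hE, Finset.mem_filter] at ht
    exact ⟨t, ht.2.2⟩
  have hMovsub : Mov ⊆ Finset.univ.image v := by
    intro i hi
    simp only [hMov, Finset.mem_filter] at hi
    obtain ⟨t, ht⟩ := hmem i hi.2
    have : i ∈ edg v t := by
      rw [← ht]; exact Finset.mem_insert_of_mem (Finset.mem_singleton_self i)
    rw [mem_edg v hk] at this
    rcases this with h | h <;> rw [h] <;>
      exact Finset.mem_image_of_mem v (Finset.mem_univ _)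
  have hMoveq : Mov = Finset.univ.image v := by
    apply Finset.eq_of_subset_of_card_le hMovsub
    rw [hcard, Finset.card_image_of_injective _ hv, Finset.card_univ, Fintype.card_fin]
  have hfix : ∀ x, x ∉ Finset.univ.image v → σ x = x := by
    intro x hx
    by_contra hc
    exact hx (hMoveq ▸ (by simp [hMov, hc] : x ∈ Mov))
  have hmoved : ∀ j : Fin k, ¬ σ (v j) = v j := by
    intro j
    have : v j ∈ Mov := hMoveq ▸ Finset.mem_image_of_mem v (Finset.mem_univ j)
    simpa [hMov] using this
  have hdich : ∀ j : Fin k, σ (v j) = v (j + 1) ∨ σ (v j) = v (j - 1) := by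
    intro j
    obtain ⟨t, ht⟩ := hmem (v j) (hmoved j)
    have hj : v j ∈ edg v t := by
      rw [← ht]; exact Finset.mem_insert_of_mem (Finset.mem_singleton_self _)
    have hsj : σ (v j) ∈ edg v t := by
      rw [← ht]; exact Finset.mem_insert_self _ _
    rw [mem_edg v hk] at hj hsj
    rcases hj with hj | hj
    · have hjt := hv hj
      rcases hsj with h | h
      · exact absurd (h.trans (congrArg v hjt.symm)) (hmoved j)
      · left; rw [h, ← hjt]
    · have hjt := hv hj
      rcases hsj with h | h
      · right; rw [h]; congr 1; rw [hjt, add_sub_cancel_right]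
      · exact absurd (h.trans (congrArg v hjt.symm)) (hmoved j)
  have hnoswap : ∀ j : Fin k, ¬ (σ (v j) = v (j + 1) ∧ σ (v (j + 1)) = v j) := by
    rintro j ⟨h1, h2⟩
    have hedg : edg v j = {v j, v (j + 1)} := by rw [edg, hrot hk]
    have e1 : v j ∈ E j := by
      simp only [hE, Finset.mem_filter]
      refine ⟨Finset.mem_univ _, hmoved j, ?_⟩
      rw [h1, hedg, Finset.pair_comm]
    have e2 : v (j + 1) ∈ E j := by
      simp only [hE, Finset.mem_filter]
      refine ⟨Finset.mem_univ _, hmoved (j + 1), ?_⟩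
      rw [h2, hedg]
    have hne : v j ≠ v (j + 1) := fun h => add_one_ne hk j (hv h).symm
    have : 1 < (E j).card := Finset.one_lt_card.mpr ⟨v j, e1, v (j + 1), e2, hne⟩
    rw [hEcard j] at this
    omega
  have hfwd : ∀ j : Fin k, σ (v j) = v (j + 1) → σ (v (j + 1)) = v (j + 1 + 1) := by
    intro j hj
    rcases hdich (j + 1) with h | h
    · exact h
    · rw [add_sub_cancel_right] at h
      exact absurd ⟨hj, h⟩ (hnoswap j)
  have hbwd : ∀ j : Fin k, σ (v j) = v (j - 1) → σ (v (j - 1)) = v (j - 1 - 1) := by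
    intro j hj
    rcases hdich (j - 1) with h | h
    · rw [sub_add_cancel] at h
      exfalso
      apply hnoswap (j - 1)
      constructor
      · rw [sub_add_cancel]; exact h
      · rw [sub_add_cancel]; exact hj
    · exact h
  rcases hdich 0 with h0 | h0
  · left
    have hall : ∀ m : ℕ, σ (v (m : Fin k)) = v ((m : Fin k) + 1) := by
      intro m
      induction m with
      | zero => simpa using h0
      | succ m ih =>
        have := hfwd _ ih
        push_cast
        exact this
    have hallj : ∀ j : Fin k, σ (v j) = v (j + 1) := by
      intro j
      have := hall j.val
      rwa [Fin.cast_val_eq_self] at this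
    ext x
    by_cases hx : x ∈ Finset.univ.image v
    · obtain ⟨j, -, rfl⟩ := Finset.mem_image.mp hx
      rw [hallj j, cyc_apply_v, hrot hk]
    · rw [hfix x hx, cyc_apply_not v hv hx]
  · right
    have hall : ∀ m : ℕ, σ (v (-(m : Fin k))) = v (-(m : Fin k) - 1) := by
      intro m
      induction m with
      | zero => simpa using h0
      | succ m ih =>
        have := hbwd _ ih
        push_cast [neg_add]
        convert this using 3 <;> ring
    have hallj : ∀ j : Fin k, σ (v j) = v (j - 1) := by
      intro j
      have := hall (-j).val
      rwa [Fin.cast_val_eq_self, neg_neg] at this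
    ext x
    by_cases hx : x ∈ Finset.univ.image v
    · obtain ⟨j, -, rfl⟩ := Finset.mem_image.mp hx
      rw [hallj j, cyc_inv_apply_v' v hv hk]
    · rw [hfix x hx, cyc_inv_apply_not v hv hx]

end Cyc

section Main

variable [NeZero k] {A : Matrix (Fin n) (Fin n) ℝ} (v : Fin k → Fin n)

lemma inner_sum (σ : Equiv.Perm (Fin n)) :
    ∑ s : Fin k → Bool, (∏ t, (if s t then (1:ℝ) else -1)) *
      ∏ i ∈ Finset.univ.filter (fun i => ¬ σ i = i), (-(BS A v s (σ i) i))
    = (∏ i ∈ Finset.univ.filter (fun i => ¬ σ i = i), (-(B0 A (σ i) i))) *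
      ∏ t, ((-1:ℝ)^(NE v σ t) - 1) := by
  classical
  have h1 : ∀ s : Fin k → Bool,
      (∏ i ∈ Finset.univ.filter (fun i => ¬ σ i = i), (-(BS A v s (σ i) i)))
      = (∏ i ∈ Finset.univ.filter (fun i => ¬ σ i = i), (-(B0 A (σ i) i))) *
        ∏ t, (if s t then (-1:ℝ)^(NE v σ t) else 1) := by
    intro s
    have e1 : ∀ i ∈ Finset.univ.filter (fun i => ¬ σ i = i),
        -(BS A v s (σ i) i) = (-(B0 A (σ i) i)) * msign v s (σ i) i := by
      intro i _
      simp only [BS]; ring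
    rw [Finset.prod_congr rfl e1, Finset.prod_mul_distrib]
    congr 1
    unfold msign
    rw [Finset.prod_comm]
    refine Finset.prod_congr rfl fun t _ => ?_
    by_cases hst : s t
    · simp only [hst, true_and]
      rw [Finset.prod_ite (fun _ => (-1:ℝ)) (fun _ => (1:ℝ)), Finset.prod_const,
        Finset.prod_const, one_pow, mul_one, Finset.filter_filter]
      rw [if_pos trivial]
      rfl
    · simp [hst]
  calc ∑ s : Fin k → Bool, (∏ t, (if s t then (1:ℝ) else -1)) *
        ∏ i ∈ Finset.univ.filter (fun i => ¬ σ i = i), (-(BS A v s (σ i) i))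
      = ∑ s : Fin k → Bool,
        (∏ i ∈ Finset.univ.filter (fun i => ¬ σ i = i), (-(B0 A (σ i) i))) *
          ∏ t, ((if s t then (1:ℝ) else -1) * (if s t then (-1:ℝ)^(NE v σ t) else 1)) := by
        refine Finset.sum_congr rfl fun s _ => ?_
        rw [h1 s, Finset.prod_mul_distrib]
        ring
    _ = (∏ i ∈ Finset.univ.filter (fun i => ¬ σ i = i), (-(B0 A (σ i) i))) *
        ∑ s : Fin k → Bool,
          ∏ t, ((if s t then (1:ℝ) else -1) * (if s t then (-1:ℝ)^(NE v σ t) else 1)) := by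
        rw [Finset.mul_sum]
    _ = (∏ i ∈ Finset.univ.filter (fun i => ¬ σ i = i), (-(B0 A (σ i) i))) *
        ∏ t, ∑ b : Bool, ((if b then (1:ℝ) else -1) * (if b then (-1:ℝ)^(NE v σ t) else 1)) := by
        rw [Fintype.prod_sum]
    _ = (∏ i ∈ Finset.univ.filter (fun i => ¬ σ i = i), (-(B0 A (σ i) i))) *
        ∏ t, ((-1:ℝ)^(NE v σ t) - 1) := by
        congr 1
        refine Finset.prod_congr rfl fun t _ => ?_
        rw [Fintype.sum_bool]
        norm_num
        ring

lemma key (hk : 3 ≤ k)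
    (hdiag : ∀ i, A i i = 0) (hnn : ∀ i j, 0 ≤ A i j)
    (hsymm : ∀ i j, A i j ≠ 0 ↔ A j i ≠ 0)
    (hsame : ∀ B₁ B₂ : Matrix (Fin n) (Fin n) ℝ,
      IsSkewSigning A B₁ → IsSkewSigning A B₂ → B₁.charpoly = B₂.charpoly)
    (hv : Function.Injective v) :
    (∏ j : Fin k, (-(B0 A (v (j + 1)) (v j)))) +
      (∏ j : Fin k, (-(B0 A (v j) (v (j + 1))))) = 0 := by
  classical
  have hkn : k ≤ n := by
    have := Fintype.card_le_of_injective v hv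
    simpa using this
  set r := n - k with hr
  set c := cyc v hv with hcdef
  set F : Equiv.Perm (Fin n) → ℝ := fun σ =>
    if (Finset.univ.filter fun i => σ i = i).card = r then
      ((Equiv.Perm.sign σ : ℤ) : ℝ) *
        ((∏ i ∈ Finset.univ.filter (fun i => ¬ σ i = i), (-(B0 A (σ i) i))) *
          ∏ t, ((-1:ℝ)^(NE v σ t) - 1))
    else 0 with hF
  have hZ : ∑ σ : Equiv.Perm (Fin n), F σ = 0 := by
    have hconstant : ∀ s : Fin k → Bool,
        (BS A v s).charpoly.coeff r = (BS A v (fun _ => false)).charpoly.coeff r := by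
      intro s
      rw [hsame _ _ (BS_skew hdiag hnn hsymm v s) (BS_skew hdiag hnn hsymm v (fun _ => false))]
    have hz0 : ∑ s : Fin k → Bool, (∏ t, (if s t then (1:ℝ) else -1)) *
        ((BS A v s).charpoly.coeff r) = 0 := by
      calc ∑ s : Fin k → Bool, (∏ t, (if s t then (1:ℝ) else -1)) *
            ((BS A v s).charpoly.coeff r)
          = (∑ s : Fin k → Bool, ∏ t, (if s t then (1:ℝ) else -1)) *
            ((BS A v (fun _ => false)).charpoly.coeff r) := by
            rw [Finset.sum_mul]
            exact Finset.sum_congr rfl fun s _ => by rw [hconstant s]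
        _ = 0 := by
            have he : ∑ s : Fin k → Bool, ∏ t : Fin k, (if s t then (1:ℝ) else -1)
                = ∏ t : Fin k, ∑ b : Bool, (if b then (1:ℝ) else -1) :=
              (Fintype.prod_sum (fun (_ : Fin k) (b : Bool) => if b then (1:ℝ) else -1)).symm
            rw [he]
            have hb : ∑ b : Bool, (if b then (1:ℝ) else -1) = 0 := by simp
            rw [hb, Finset.prod_const, Finset.card_univ, Fintype.card_fin]
            rw [zero_pow (by omega : k ≠ 0), zero_mul]
    have main : ∑ s : Fin k → Bool, (∏ t, (if s t then (1:ℝ) else -1)) *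
        ((BS A v s).charpoly.coeff r) = ∑ σ : Equiv.Perm (Fin n), F σ := by
      calc ∑ s : Fin k → Bool, (∏ t, (if s t then (1:ℝ) else -1)) *
            ((BS A v s).charpoly.coeff r)
          = ∑ s : Fin k → Bool, ∑ σ : Equiv.Perm (Fin n),
              (∏ t, (if s t then (1:ℝ) else -1)) *
              (if (Finset.univ.filter fun i => σ i = i).card = r then
                ((Equiv.Perm.sign σ : ℤ) : ℝ) *
                  ∏ i ∈ Finset.univ.filter (fun i => ¬ σ i = i), (-(BS A v s (σ i) i))
              else 0) := by
            refine Finset.sum_congr rfl fun s _ => ?_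
            rw [charpoly_coeff_eq _ (BS_diag hdiag v s) r, Finset.mul_sum]
        _ = ∑ σ : Equiv.Perm (Fin n), ∑ s : Fin k → Bool,
              (∏ t, (if s t then (1:ℝ) else -1)) *
              (if (Finset.univ.filter fun i => σ i = i).card = r then
                ((Equiv.Perm.sign σ : ℤ) : ℝ) *
                  ∏ i ∈ Finset.univ.filter (fun i => ¬ σ i = i), (-(BS A v s (σ i) i))
              else 0) := Finset.sum_comm
        _ = ∑ σ : Equiv.Perm (Fin n), F σ := by
            refine Finset.sum_congr rfl fun σ _ => ?_
            by_cases hfix : (Finset.univ.filter fun i => σ i = i).card = r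
            · simp only [hfix, if_true, hF]
              calc ∑ s : Fin k → Bool, (∏ t, (if s t then (1:ℝ) else -1)) *
                    (((Equiv.Perm.sign σ : ℤ) : ℝ) *
                      ∏ i ∈ Finset.univ.filter (fun i => ¬ σ i = i), (-(BS A v s (σ i) i)))
                  = ((Equiv.Perm.sign σ : ℤ) : ℝ) *
                    ∑ s : Fin k → Bool, (∏ t, (if s t then (1:ℝ) else -1)) *
                      ∏ i ∈ Finset.univ.filter (fun i => ¬ σ i = i), (-(BS A v s (σ i) i)) := by
                    rw [Finset.mul_sum]
                    exact Finset.sum_congr rfl fun s _ => by ring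
                _ = ((Equiv.Perm.sign σ : ℤ) : ℝ) *
                    ((∏ i ∈ Finset.univ.filter (fun i => ¬ σ i = i), (-(B0 A (σ i) i))) *
                      ∏ t, ((-1:ℝ)^(NE v σ t) - 1)) := by
                    rw [inner_sum]
            · simp only [hfix, if_false, hF]
              simp
    rw [← main]
    exact hz0
  have hvanish : ∀ σ ∈ (Finset.univ : Finset (Equiv.Perm (Fin n))),
      σ ≠ c ∧ σ ≠ c⁻¹ → F σ = 0 := by
    rintro σ _ ⟨h1, h2⟩
    rw [hF]
    by_cases hfix : (Finset.univ.filter fun i => σ i = i).card = r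
    · simp only [hfix, if_true]
      by_cases hodd : ∀ t, Odd (NE v σ t)
      · exfalso
        have hcard : (Finset.univ.filter fun i => ¬ σ i = i).card = k := by
          have hsplit := Finset.card_filter_add_card_filter_not
            (s := (Finset.univ : Finset (Fin n))) (p := fun i => σ i = i)
          rw [Finset.card_univ, Fintype.card_fin] at hsplit
          omega
        rcases classify v hv hk σ hcard hodd with h | h
        · exact h1 h
        · exact h2 h
      · push_neg at hodd
        obtain ⟨t0, ht0⟩ := hodd
        rw [Nat.not_odd_iff_even] at ht0
        have hzero : (∏ t, ((-1:ℝ)^(NE v σ t) - 1)) = 0 :=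
          Finset.prod_eq_zero (Finset.mem_univ t0) (by rw [ht0.neg_one_pow]; ring)
        rw [hzero, mul_zero, mul_zero]
    · simp [hfix]
  have hsum2 : F c + F c⁻¹ = 0 := by
    rw [← Finset.sum_eq_add_of_mem c c⁻¹ (Finset.mem_univ _) (Finset.mem_univ _)
      (cyc_ne_inv v hv hk) hvanish]
    exact hZ
  have hmovedc : (Finset.univ.filter fun i => ¬ c i = i) = Finset.univ.image v :=
    moved_cyc v hv hk
  have hmovedci : (Finset.univ.filter fun i => ¬ c⁻¹ i = i) = Finset.univ.image v := by
    rw [moved_inv, hmovedc]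
  have hmovedcard : (Finset.univ.filter fun i => ¬ c i = i).card = k := by
    rw [hmovedc, Finset.card_image_of_injective _ hv, Finset.card_univ, Fintype.card_fin]
  have hmovedcardi : (Finset.univ.filter fun i => ¬ c⁻¹ i = i).card = k := by
    rw [hmovedci, Finset.card_image_of_injective _ hv, Finset.card_univ, Fintype.card_fin]
  have hfixc : (Finset.univ.filter fun i => c i = i).card = r := by
    have hsplit := Finset.card_filter_add_card_filter_not
      (s := (Finset.univ : Finset (Fin n))) (p := fun i => c i = i)
    rw [Finset.card_univ, Fintype.card_fin] at hsplit
    omega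
  have hfixci : (Finset.univ.filter fun i => c⁻¹ i = i).card = r := by
    have hsplit := Finset.card_filter_add_card_filter_not
      (s := (Finset.univ : Finset (Fin n))) (p := fun i => c⁻¹ i = i)
    rw [Finset.card_univ, Fintype.card_fin] at hsplit
    omega
  have hNc : ∀ t, NE v c t = 1 := fun t => by
    rw [NE, Ecyc v hv hk]; exact Finset.card_singleton _
  have hNci : ∀ t, NE v c⁻¹ t = 1 := fun t => by
    rw [NE, Ecyc_inv v hv hk]; exact Finset.card_singleton _
  have hQ : ∀ N : Fin k → ℕ, (∀ t, N t = 1) →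
      (∏ t : Fin k, ((-1:ℝ)^(N t) - 1)) = (-2)^k := by
    intro N hN
    rw [Finset.prod_congr rfl (fun t _ => by rw [hN t]; norm_num : ∀ t ∈ Finset.univ,
      ((-1:ℝ)^(N t) - 1) = -2)]
    rw [Finset.prod_const, Finset.card_univ, Fintype.card_fin]
  have hP1 : (∏ i ∈ Finset.univ.filter (fun i => ¬ c i = i), (-(B0 A (c i) i)))
      = ∏ j : Fin k, (-(B0 A (v (j + 1)) (v j))) := by
    rw [hmovedc, Finset.prod_image (fun a _ b _ h => hv h)]
    exact Finset.prod_congr rfl fun j _ => by rw [cyc_apply_v' v hv hk]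
  have hP2 : (∏ i ∈ Finset.univ.filter (fun i => ¬ c⁻¹ i = i), (-(B0 A (c⁻¹ i) i)))
      = ∏ j : Fin k, (-(B0 A (v j) (v (j + 1)))) := by
    rw [hmovedci, Finset.prod_image (fun a _ b _ h => hv h)]
    have step : ∀ j ∈ Finset.univ, -(B0 A (c⁻¹ (v j)) (v j)) = -(B0 A (v (j - 1)) (v j)) :=
      fun j _ => by rw [hcdef, cyc_inv_apply_v' v hv hk]
    rw [Finset.prod_congr rfl step]
    rw [← Equiv.prod_comp (Equiv.addRight (1 : Fin k))
      (fun j => -(B0 A (v (j - 1)) (v j)))]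
    refine Finset.prod_congr rfl fun u _ => ?_
    simp only [Equiv.coe_addRight]
    rw [add_sub_cancel_right]
  have hsign : ((Equiv.Perm.sign c⁻¹ : ℤ) : ℝ) = ((Equiv.Perm.sign c : ℤ) : ℝ) := by
    rw [Equiv.Perm.sign_inv]
  have hFc : F c = ((Equiv.Perm.sign c : ℤ) : ℝ) *
      ((∏ j : Fin k, (-(B0 A (v (j + 1)) (v j)))) * (-2:ℝ)^k) := by
    rw [hF]
    simp only [hfixc, if_true]
    rw [hP1, hQ _ hNc]
  have hFci : F c⁻¹ = ((Equiv.Perm.sign c : ℤ) : ℝ) *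
      ((∏ j : Fin k, (-(B0 A (v j) (v (j + 1))))) * (-2:ℝ)^k) := by
    rw [hF]
    simp only [hfixci, if_true]
    rw [hP2, hQ _ hNci, hsign]
  rw [hFc, hFci] at hsum2
  have hfactor : ((Equiv.Perm.sign c : ℤ) : ℝ) *
      (((∏ j : Fin k, (-(B0 A (v (j + 1)) (v j)))) +
        (∏ j : Fin k, (-(B0 A (v j) (v (j + 1)))))) * (-2:ℝ)^k) = 0 := by
    rw [← hsum2]; ring
  have hSne : ((Equiv.Perm.sign c : ℤ) : ℝ) ≠ 0 := by
    rcases Int.units_eq_one_or (Equiv.Perm.sign c) with h | h <;> rw [h] <;> norm_num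
  have hEne : ((-2:ℝ))^k ≠ 0 := pow_ne_zero _ (by norm_num)
  rcases mul_eq_zero.mp hfactor with h | h
  · exact absurd h hSne
  rcases mul_eq_zero.mp h with h | h
  · exact h
  · exact absurd h hEne

end Main

end Stmt16

/- Statement 16: for a positive weighted loopless symmetric digraph with weighted adjacency
matrix A, if all skew-signings of (D, ω) have the same characteristic polynomial, then A is
cycle-symmetric: every cyclic product over distinct indices equals the reversed product. -/
theorem stmt_16 (n : ℕ) (A : Matrix (Fin n) (Fin n) ℝ)
    (hdiag : ∀ i, A i i = 0) (hnn : ∀ i j, 0 ≤ A i j)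
    (hsymm : ∀ i j, A i j ≠ 0 ↔ A j i ≠ 0)
    (hsame : ∀ B₁ B₂ : Matrix (Fin n) (Fin n) ℝ,
      IsSkewSigning A B₁ → IsSkewSigning A B₂ → B₁.charpoly = B₂.charpoly) :
    ∀ (k : ℕ) (v : Fin k → Fin n), Function.Injective v →
      (∏ j : Fin k, A (v j) (v (finRotate k j))) =
        ∏ j : Fin k, A (v (finRotate k j)) (v j) := by
  intro k v hv
  rcases lt_or_ge k 3 with hk | hk
  · interval_cases k
    · simp
    · rw [finRotate_one]
      simp [hdiag]
    · rw [Fin.prod_univ_two, Fin.prod_univ_two]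
      have h0 : finRotate 2 0 = 1 := by decide
      have h1 : finRotate 2 1 = 0 := by decide
      rw [h0, h1]
      ring
  · haveI : NeZero k := ⟨by omega⟩
    have hkey := Stmt16.key v hk hdiag hnn hsymm hsame hv
    simp only [Stmt16.hrot hk]
    have hvne : ∀ j : Fin k, v j ≠ v (j + 1) :=
      fun j h => Stmt16.add_one_ne hk j (hv h).symm
    set e : Fin k → ℝ := fun j => if v j ≤ v (j + 1) then 1 else -1 with hedef
    have hB0f : ∀ j : Fin k, Stmt16.B0 A (v j) (v (j + 1)) = e j * A (v j) (v (j + 1)) := by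
      intro j
      simp only [Stmt16.B0, hedef]
      split_ifs <;> ring
    have hB0b : ∀ j : Fin k, Stmt16.B0 A (v (j + 1)) (v j) = (-(e j)) * A (v (j + 1)) (v j) := by
      intro j
      simp only [Stmt16.B0, hedef]
      by_cases h : v j ≤ v (j + 1)
      · have hlt : v j < v (j + 1) := lt_of_le_of_ne h (hvne j)
        rw [if_neg (not_le.mpr hlt), if_pos h]
        ring
      · have hle : v (j + 1) ≤ v j := le_of_not_ge h
        rw [if_pos hle, if_neg h]
        ring
    set T := ∏ j : Fin k, e j with hT
    set W1 := ∏ j : Fin k, A (v j) (v (j + 1)) with hW1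
    set W2 := ∏ j : Fin k, A (v (j + 1)) (v j) with hW2
    have hprod1 : (∏ j : Fin k, (-(Stmt16.B0 A (v (j + 1)) (v j)))) = T * W2 := by
      rw [hT, hW2, ← Finset.prod_mul_distrib]
      exact Finset.prod_congr rfl fun j _ => by rw [hB0b j]; ring
    have hprod2 : (∏ j : Fin k, (-(Stmt16.B0 A (v j) (v (j + 1))))) = (-1:ℝ)^k * (T * W1) := by
      have : (∏ j : Fin k, (-(Stmt16.B0 A (v j) (v (j + 1)))))
          = ∏ j : Fin k, ((-1) * (e j * A (v j) (v (j + 1)))) := by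
        exact Finset.prod_congr rfl fun j _ => by rw [hB0f j]; ring
      rw [this, Finset.prod_mul_distrib, Finset.prod_const, Finset.card_univ, Fintype.card_fin,
        Finset.prod_mul_distrib, hT, hW1]
    rw [hprod1, hprod2] at hkey
    have hTne : T ≠ 0 := by
      rw [hT]
      refine Finset.prod_ne_zero_iff.mpr fun j _ => ?_
      simp only [hedef]
      split_ifs <;> norm_num
    have hfac : T * (W2 + (-1:ℝ)^k * W1) = 0 := by linear_combination hkey
    have hWW : W2 + (-1:ℝ)^k * W1 = 0 := by
      rcases mul_eq_zero.mp hfac with h | h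
      · exact absurd h hTne
      · exact h
    rcases Nat.even_or_odd k with hpar | hpar
    · rw [hpar.neg_one_pow, one_mul] at hWW
      have h1 : 0 ≤ W1 := Finset.prod_nonneg fun j _ => hnn _ _
      have h2 : 0 ≤ W2 := Finset.prod_nonneg fun j _ => hnn _ _
      have e1 : W1 = 0 := by linarith
      have e2 : W2 = 0 := by linarith
      rw [e1, e2]
    · rw [hpar.neg_one_pow] at hWW
      linarith
end

section
/- Let B be an n×n real skew-symmetric matrix whose associated digraph contains no even cycles of length greater than 2. Then det(xI − B) = ∑_{k even} m_k x^{n−k}, where m_k = ∑ over collections of k/2 vertex-disjoint pairs {i,j} with B i j ≠ 0 of ∏ (B i j)², i.e., each coefficient of x^{n−k} is the sum over matchings of size k/2 in the graph of B of the product of the squared entries. -/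
open Matrix

open Equiv Equiv.Perm Finset Polynomial

namespace Stmt18Aux

variable {n : ℕ}

/-- One reduction step for involutions: remove a 2-cycle {a, σ a}. -/
lemma invol_step (σ : Equiv.Perm (Fin n)) (hinv : σ * σ = 1) (a : Fin n) (ha : a ∈ σ.support) :
    let σ' := σ * Equiv.swap a (σ a)
    σ' * σ' = 1 ∧ σ'.support = σ.support \ {a, σ a} ∧
      (Equiv.Perm.sign σ : ℤ) = -(Equiv.Perm.sign σ' : ℤ) ∧
      (∀ x ∈ σ'.support, σ' x = σ x) ∧ σ a ∈ σ.support ∧ σ a ≠ a ∧ σ (σ a) = a := by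
  intro σ'
  have hσσ : ∀ x, σ (σ x) = x := fun x => by
    have := Equiv.ext_iff.mp hinv x
    simpa [Equiv.Perm.mul_apply] using this
  have hane : σ a ≠ a := mem_support.mp ha
  have happ : ∀ x, σ' x = σ (Equiv.swap a (σ a) x) := fun x => rfl
  have hσ'a : σ' a = a := by rw [happ, Equiv.swap_apply_left, hσσ]
  have hσ'b : σ' (σ a) = σ a := by rw [happ, Equiv.swap_apply_right]
  have hσ'x : ∀ x, x ≠ a → x ≠ σ a → σ' x = σ x := fun x h1 h2 => by
    rw [happ, Equiv.swap_apply_of_ne_of_ne h1 h2]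
  have hsupp : σ'.support = σ.support \ {a, σ a} := by
    ext x
    by_cases h1 : x = a
    · subst h1; simp [mem_support, hσ'a]
    · by_cases h2 : x = σ a
      · subst h2; simp [mem_support, hσ'b]
      · simp [mem_support, hσ'x x h1 h2, h1, h2]
  refine ⟨?_, hsupp, ?_, ?_, ?_, hane, hσσ a⟩
  · refine Equiv.ext fun x => ?_
    show σ' (σ' x) = x
    by_cases h1 : x = a
    · subst h1; rw [hσ'a, hσ'a]
    · by_cases h2 : x = σ a
      · subst h2; rw [hσ'b, hσ'b]
      · rw [hσ'x x h1 h2]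
        have hne1 : σ x ≠ a := fun h => h2 (by rw [← h, hσσ])
        have hne2 : σ x ≠ σ a := fun h => h1 (σ.injective h)
        rw [hσ'x _ hne1 hne2, hσσ]
  · have : Equiv.Perm.sign σ' = Equiv.Perm.sign σ * (-1) := by
      rw [Equiv.Perm.sign_mul, Equiv.Perm.sign_swap hane.symm]
    rw [this]; push_cast; ring
  · intro x hx
    rw [hsupp] at hx
    simp only [mem_sdiff, mem_insert, mem_singleton, not_or] at hx
    exact hσ'x x hx.2.1 hx.2.2
  · rw [mem_support]
    intro h
    exact hane (by rw [← hσσ a, h, h])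

lemma invol_card_even : ∀ m (σ : Equiv.Perm (Fin n)), σ.support.card = m → σ * σ = 1 → Even m := by
  intro m
  induction m using Nat.strong_induction_on with
  | _ m ih =>
    intro σ hcard hinv
    rcases Finset.eq_empty_or_nonempty σ.support with he | ⟨a, ha⟩
    · rw [he] at hcard; simp at hcard; exact hcard ▸ Even.zero
    · obtain ⟨hinv', hsupp, _, _, hb, hba, _⟩ := invol_step σ hinv a ha
      have hsub : {a, σ a} ⊆ σ.support := by
        intro x hx; simp only [mem_insert, mem_singleton] at hx
        rcases hx with rfl | rfl; exact ha; exact hb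
      have hc2 : ({a, σ a} : Finset (Fin n)).card = 2 := by
        rw [Finset.card_insert_of_notMem (by simp [Ne.symm hba]), Finset.card_singleton]
      have hcard' : (σ * Equiv.swap a (σ a)).support.card = m - 2 := by
        rw [hsupp, Finset.card_sdiff_of_subset hsub, hc2, hcard]
      have hm2 : 2 ≤ m := by
        rw [← hcard]; calc 2 = ({a, σ a} : Finset (Fin n)).card := hc2.symm
          _ ≤ _ := Finset.card_le_card hsub
      have := ih (m - 2) (by omega) _ hcard' hinv'
      obtain ⟨r, hr⟩ := this
      exact ⟨r + 1, by omega⟩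

lemma invol_value (B : Matrix (Fin n) (Fin n) ℝ) (hskew : ∀ i j, B j i = -B i j) :
    ∀ m (σ : Equiv.Perm (Fin n)), σ.support.card = m → σ * σ = 1 →
    ((Equiv.Perm.sign σ : ℤ) : ℝ) * ∏ i ∈ σ.support, B i (σ i) =
      ∏ i ∈ σ.support, |B i (σ i)| := by
  intro m
  induction m using Nat.strong_induction_on with
  | _ m ih =>
    intro σ hcard hinv
    rcases Finset.eq_empty_or_nonempty σ.support with he | ⟨a, ha⟩
    · have h1 : σ = 1 := support_eq_empty_iff.mp he
      subst h1; simp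
    · obtain ⟨hinv', hsupp, hsign, hagree, hb, hba, hσσa⟩ := invol_step σ hinv a ha
      set σ' := σ * Equiv.swap a (σ a) with hσ'def
      have hsub : {a, σ a} ⊆ σ.support := by
        intro x hx; simp only [mem_insert, mem_singleton] at hx
        rcases hx with rfl | rfl; exact ha; exact hb
      have hc2 : ({a, σ a} : Finset (Fin n)).card = 2 := by
        rw [Finset.card_insert_of_notMem (by simp [Ne.symm hba]), Finset.card_singleton]
      have hcard' : σ'.support.card = m - 2 := by
        rw [hsupp, Finset.card_sdiff_of_subset hsub, hc2, hcard]
      have hm2 : 2 ≤ m := by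
        rw [← hcard]; calc 2 = ({a, σ a} : Finset (Fin n)).card := hc2.symm
          _ ≤ _ := Finset.card_le_card hsub
      have hIH := ih (m - 2) (by omega) σ' hcard' hinv'
      have hdecomp : σ.support = insert a (insert (σ a) σ'.support) := by
        rw [hsupp]; ext x
        simp only [mem_insert, mem_sdiff, mem_singleton, not_or]
        constructor
        · intro hx
          by_cases h1 : x = a
          · exact Or.inl h1
          · by_cases h2 : x = σ a
            · exact Or.inr (Or.inl h2)
            · exact Or.inr (Or.inr ⟨hx, h1, h2⟩)
        · rintro (rfl | rfl | ⟨hx, _, _⟩)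
          · exact mem_support.mpr (mem_support.mp ha)
          · exact hb
          · exact hx
      have hnotmem1 : a ∉ insert (σ a) σ'.support := by
        simp only [mem_insert, not_or]
        refine ⟨Ne.symm hba, ?_⟩
        rw [hsupp]; simp
      have hnotmem2 : σ a ∉ σ'.support := by rw [hsupp]; simp
      have hprodσ : ∀ (f : Fin n → ℝ),
          ∏ i ∈ σ.support, f i = f a * f (σ a) * ∏ i ∈ σ'.support, f i := by
        intro f
        rw [hdecomp, Finset.prod_insert hnotmem1, Finset.prod_insert hnotmem2, mul_assoc]
      have hagree' : ∏ i ∈ σ'.support, B i (σ i) = ∏ i ∈ σ'.support, B i (σ' i) :=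
        Finset.prod_congr rfl fun x hx => by rw [hagree x hx]
      have hagree'' : ∏ i ∈ σ'.support, |B i (σ i)| = ∏ i ∈ σ'.support, |B i (σ' i)| :=
        Finset.prod_congr rfl fun x hx => by rw [hagree x hx]
      rw [hprodσ (fun i => B i (σ i)), hprodσ (fun i => |B i (σ i)|), hagree', hagree'']
      have hBba : B (σ a) (σ (σ a)) = -B a (σ a) := by rw [hσσa, hskew]
      rw [hBba]
      have hsignR : ((Equiv.Perm.sign σ : ℤ) : ℝ) = -((Equiv.Perm.sign σ' : ℤ) : ℝ) := by
        rw [hsign]; push_cast; ring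
      rw [hsignR]
      rw [abs_neg]
      have habs : |B a (σ a)| * |B a (σ a)| = B a (σ a) * B a (σ a) := abs_mul_abs_self _
      calc -((Equiv.Perm.sign σ' : ℤ) : ℝ) * (B a (σ a) * -B a (σ a) * ∏ i ∈ σ'.support, B i (σ' i))
          = (B a (σ a) * B a (σ a)) *
            (((Equiv.Perm.sign σ' : ℤ) : ℝ) * ∏ i ∈ σ'.support, B i (σ' i)) := by ring
        _ = (|B a (σ a)| * |B a (σ a)|) * ∏ i ∈ σ'.support, |B i (σ' i)| := by rw [habs, hIH]
        _ = |B a (σ a)| * |B a (σ a)| * ∏ i ∈ σ'.support, |B i (σ' i)| := by ring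

lemma coe_finRotate' (m : ℕ) (hm : 0 < m) (j : Fin m) :
    ((finRotate m j : Fin m) : ℕ) = ((j : ℕ) + 1) % m := by
  obtain ⟨m', rfl⟩ := Nat.exists_eq_succ_of_ne_zero (by omega : m ≠ 0)
  rw [coe_finRotate]
  by_cases hl : j = Fin.last m'
  · rw [if_pos hl, hl]
    simp [Fin.last]
  · rw [if_neg hl]
    have : (j : ℕ) < m' := Fin.val_lt_last hl
    rw [Nat.mod_eq_of_lt (by omega)]

lemma cycle_card_two_or_odd (B : Matrix (Fin n) (Fin n) ℝ)
    (hnoeven : ∀ k : ℕ, 2 < k → Even k → ∀ v : Fin k → Fin n, Function.Injective v →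
      ∃ j : Fin k, B (v j) (v (finRotate k j)) = 0)
    (σ : Equiv.Perm (Fin n)) (hB : ∀ i ∈ σ.support, B i (σ i) ≠ 0)
    (x : Fin n) (hx : x ∈ σ.support) :
    (σ.cycleOf x).support.card = 2 ∨ Odd (σ.cycleOf x).support.card := by
  by_contra hcon
  push_neg at hcon
  obtain ⟨hne2, hnodd⟩ := hcon
  have heven : Even (σ.cycleOf x).support.card := Nat.not_odd_iff_even.mp hnodd
  have h2le : 2 ≤ (σ.cycleOf x).support.card :=
    two_le_card_support_cycleOf_iff.mpr (mem_support.mp hx)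
  obtain ⟨m, hm⟩ : ∃ m, (σ.cycleOf x).support.card = m := ⟨_, rfl⟩
  rw [hm] at heven h2le hne2
  have hm2 : 2 < m := by omega
  have hxc : x ∈ (σ.cycleOf x).support :=
    mem_support_cycleOf_iff.mpr ⟨Equiv.Perm.SameCycle.refl σ x, hx⟩
  have hcycOn : σ.IsCycleOn (σ.cycleOf x).support := isCycleOn_support_cycleOf σ x
  set v : Fin m → Fin n := fun j => (σ ^ (j : ℕ)) x with hv
  have hvinj : Function.Injective v := by
    intro i j hij
    have := (hcycOn.pow_apply_eq_pow_apply hxc).mp hij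
    rw [hm] at this
    have hi : (i : ℕ) % m = (j : ℕ) % m := this
    rwa [Nat.mod_eq_of_lt i.isLt, Nat.mod_eq_of_lt j.isLt, ← Fin.ext_iff] at hi
  obtain ⟨j, hj⟩ := hnoeven m hm2 heven v hvinj
  have hrot : v (finRotate m j) = σ (v j) := by
    show (σ ^ ((finRotate m j : Fin m) : ℕ)) x = σ ((σ ^ (j : ℕ)) x)
    have hmod := pow_mod_card_support_cycleOf_self_apply σ ((j : ℕ) + 1) x
    rw [hm] at hmod
    rw [coe_finRotate' m (by omega) j, hmod, pow_succ', Equiv.Perm.mul_apply]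
  have hvmem : v j ∈ σ.support := by
    have : v j ∈ (σ.cycleOf x).support := by
      apply mem_support_cycleOf_iff.mpr
      exact ⟨⟨((j : ℕ) : ℤ), by simp [zpow_natCast]; rfl⟩, hx⟩
    exact support_cycleOf_le σ x this
  rw [hrot] at hj
  exact hB (v j) hvmem hj

lemma perm_apply_inv_self (c : Equiv.Perm (Fin n)) (x : Fin n) : c (c⁻¹ x) = x :=
  c.apply_symm_apply x

lemma perm_inv_apply_self (c : Equiv.Perm (Fin n)) (x : Fin n) : c⁻¹ (c x) = x :=
  c.symm_apply_apply x

/-- Reverse the cycle of `σ` through `a`. -/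
def flip (σ : Equiv.Perm (Fin n)) (a : Fin n) : Equiv.Perm (Fin n) :=
  σ * (σ.cycleOf a)⁻¹ * (σ.cycleOf a)⁻¹

lemma flip_spec (σ : Equiv.Perm (Fin n)) (a : Fin n)
    (ha : Odd (σ.cycleOf a).support.card) :
    (∀ x, flip σ a x = if x ∈ (σ.cycleOf a).support then (σ.cycleOf a)⁻¹ x else σ x) ∧
    (flip σ a).support = σ.support ∧
    Equiv.Perm.sign (flip σ a) = Equiv.Perm.sign σ ∧
    (flip σ a).cycleOf a = (σ.cycleOf a)⁻¹ ∧
    (∀ x, ((flip σ a).cycleOf x).support = (σ.cycleOf x).support) ∧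
    ¬ (flip σ a * flip σ a = 1) ∧
    flip σ a ≠ σ ∧
    flip (flip σ a) a = σ := by
  set c := σ.cycleOf a with hcdef
  have hσa : σ a ≠ a := by
    intro h
    rw [← cycleOf_eq_one_iff σ] at h
    rw [← hcdef] at h
    rw [h] at ha
    simp at ha
  have h2 : 2 ≤ c.support.card := two_le_card_support_cycleOf_iff.mpr hσa
  have h3 : 3 ≤ c.support.card := by obtain ⟨r, hr⟩ := ha; omega
  have hc : c.IsCycle := isCycle_cycleOf σ hσa
  have hac : a ∈ c.support := mem_support_cycleOf_iff.mpr ⟨Equiv.Perm.SameCycle.refl σ a,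
    mem_support.mpr hσa⟩
  have hσc : ∀ y ∈ c.support, σ y = c y := fun y hy =>
    ((mem_support_cycleOf_iff.mp hy).1.cycleOf_apply).symm
  have hinv_mem : ∀ x, x ∈ c.support → c⁻¹ x ∈ c.support := by
    intro x hx
    have : c⁻¹ x ∈ (c⁻¹).support ↔ x ∈ (c⁻¹).support := apply_mem_support
    rw [support_inv] at this
    exact this.mpr hx
  have hfixinv : ∀ x, x ∉ c.support → c⁻¹ x = x := by
    intro x hx
    have h1 : c x = x := notMem_support.mp hx
    exact inv_eq_iff_eq.mpr h1.symm
  have hP1 : ∀ x, flip σ a x = if x ∈ c.support then c⁻¹ x else σ x := by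
    intro x
    show σ (c⁻¹ (c⁻¹ x)) = _
    by_cases hx : x ∈ c.support
    · rw [if_pos hx]
      have h1 : c⁻¹ x ∈ c.support := hinv_mem x hx
      have h2' : c⁻¹ (c⁻¹ x) ∈ c.support := hinv_mem _ h1
      rw [hσc _ h2', perm_apply_inv_self c]
    · rw [if_neg hx, hfixinv x hx, hfixinv x hx]
  have hcomm : Commute σ c := by
    refine Equiv.ext fun x => ?_
    show σ (c x) = c (σ x)
    by_cases h : σ.SameCycle a x
    · rw [h.cycleOf_apply, (sameCycle_apply_right.mpr h).cycleOf_apply]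
    · rw [cycleOf_apply_of_not_sameCycle h,
        cycleOf_apply_of_not_sameCycle (fun hh => h (sameCycle_apply_right.mp hh))]
  set d := σ * c⁻¹ with hddef
  have hdc : Commute c⁻¹ d := by
    have h1 : Commute c⁻¹ σ := (hcomm.symm).inv_left
    exact h1.mul_right (Commute.refl c⁻¹)
  have hda : d a = a := by
    show σ (c⁻¹ a) = a
    rw [hσc _ (hinv_mem a hac), perm_apply_inv_self c]
  have hfd : flip σ a = c⁻¹ * d := by
    show σ * c⁻¹ * c⁻¹ = c⁻¹ * d
    rw [hddef, ← hdc.eq]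
  have hP5 : (flip σ a).cycleOf a = c⁻¹ := by
    rw [hfd, cycleOf_mul_of_apply_right_eq_self hdc a hda]
    refine (hc.inv).cycleOf_eq ?_
    have : a ∈ (c⁻¹).support := by rw [support_inv]; exact hac
    exact mem_support.mp this
  have hPsupp : (flip σ a).support = σ.support := by
    ext x
    rw [mem_support, mem_support, hP1 x]
    by_cases hx : x ∈ c.support
    · rw [if_pos hx]
      have h1 : c⁻¹ x ≠ x := by
        have : x ∈ (c⁻¹).support := by rw [support_inv]; exact hx
        exact mem_support.mp this
      have h2' : σ x ≠ x := mem_support.mp (support_cycleOf_le σ a hx)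
      exact iff_of_true h1 h2'
    · rw [if_neg hx]
  have hPsign : Equiv.Perm.sign (flip σ a) = Equiv.Perm.sign σ := by
    show Equiv.Perm.sign (σ * c⁻¹ * c⁻¹) = _
    rw [Equiv.Perm.sign_mul, Equiv.Perm.sign_mul, mul_assoc, Int.units_mul_self, mul_one]
  have hfa : flip σ a a = c⁻¹ a := by rw [hP1 a, if_pos hac]
  have hinvsuppc : (c⁻¹).support = c.support := support_inv c
  have hcca : c (c a) ≠ a := by
    have hpow : (c ^ 2) a = (σ ^ 2) a := cycleOf_pow_apply_self σ a 2
    have h4 : ¬ ((σ ^ 2) a = a) := by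
      rw [(isCycleOn_support_cycleOf σ a).pow_apply_eq hac]
      intro hdvd
      rw [← hcdef] at hdvd
      have := Nat.le_of_dvd (by norm_num) hdvd
      omega
    intro h
    apply h4
    rw [← hpow, pow_two, Equiv.Perm.mul_apply, h]
  have hfluxne : flip σ a ≠ σ := by
    intro h
    have h1 : c⁻¹ a = σ a := by rw [← hfa, h]
    rw [hσc a hac] at h1
    apply hcca
    rw [← h1, perm_apply_inv_self c]
  have hnotinv : ¬ (flip σ a * flip σ a = 1) := by
    intro h
    have h1 : flip σ a (flip σ a a) = a := by
      have := Equiv.ext_iff.mp h a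
      simpa [Equiv.Perm.mul_apply] using this
    rw [hfa, hP1 (c⁻¹ a), if_pos (hinv_mem a hac)] at h1
    have h2' := congrArg c h1
    rw [perm_apply_inv_self c] at h2'
    have h3' := congrArg c h2'
    rw [perm_apply_inv_self c] at h3'
    exact hcca h3'.symm
  have hP6 : ∀ x, ((flip σ a).cycleOf x).support = (σ.cycleOf x).support := by
    intro x
    by_cases hx : x ∈ c.support
    · have h1 : σ.SameCycle a x := (mem_support_cycleOf_iff.mp hx).1
      have hσx : σ.cycleOf x = c := (h1.cycleOf_eq).symm
      have hxmem : x ∈ ((flip σ a).cycleOf a).support := by rw [hP5, hinvsuppc]; exact hx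
      have h2' : (flip σ a).SameCycle a x := (mem_support_cycleOf_iff.mp hxmem).1
      have hfx : (flip σ a).cycleOf x = c⁻¹ := (h2'.cycleOf_eq).symm.trans hP5
      rw [hfx, hσx, hinvsuppc]
    · have hfd2 : flip σ a = d * c⁻¹ := rfl
      have h1 : (flip σ a).cycleOf x = d.cycleOf x := by
        rw [hfd2]
        exact cycleOf_mul_of_apply_right_eq_self hdc.symm x (hfixinv x hx)
      have h2' : σ.cycleOf x = d.cycleOf x := by
        have hσ_eq : σ = d * c := by rw [hddef, mul_assoc, inv_mul_cancel, mul_one]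
        have hcomm2 : Commute d c := Commute.mul_left hcomm ((Commute.refl c).inv_left)
        conv_lhs => rw [hσ_eq]
        exact cycleOf_mul_of_apply_right_eq_self hcomm2 x (notMem_support.mp hx)
      rw [h1, h2']
  have hflipflip : flip (flip σ a) a = σ := by
    show flip σ a * ((flip σ a).cycleOf a)⁻¹ * ((flip σ a).cycleOf a)⁻¹ = σ
    rw [hP5, inv_inv]
    show σ * c⁻¹ * c⁻¹ * c * c = σ
    group
  exact ⟨hP1, hPsupp, hPsign, hP5, hP6, hnotinv, hfluxne, hflipflip⟩

lemma flip_prod (B : Matrix (Fin n) (Fin n) ℝ) (hskew : ∀ i j, B j i = -B i j)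
    (σ : Equiv.Perm (Fin n)) (a : Fin n) (ha : Odd (σ.cycleOf a).support.card) :
    ∏ i ∈ (flip σ a).support, B i (flip σ a i) = - ∏ i ∈ σ.support, B i (σ i) := by
  obtain ⟨hP1, hPsupp, _, _, _, _, _, _⟩ := flip_spec σ a ha
  set c := σ.cycleOf a with hcdef
  have hσa : σ a ≠ a := by
    intro h
    rw [← cycleOf_eq_one_iff σ, ← hcdef] at h
    rw [h] at ha; simp at ha
  have hσc : ∀ y ∈ c.support, σ y = c y := fun y hy =>
    ((mem_support_cycleOf_iff.mp hy).1.cycleOf_apply).symm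
  have hsub : c.support ⊆ σ.support := support_cycleOf_le σ a
  rw [hPsupp]
  rw [← Finset.prod_sdiff hsub, ← Finset.prod_sdiff hsub]
  have houter : ∏ i ∈ σ.support \ c.support, B i (flip σ a i) =
      ∏ i ∈ σ.support \ c.support, B i (σ i) := by
    refine Finset.prod_congr rfl fun x hx => ?_
    rw [hP1 x, if_neg (Finset.mem_sdiff.mp hx).2]
  have hinner : ∏ i ∈ c.support, B i (flip σ a i) = - ∏ i ∈ c.support, B i (σ i) := by
    have h1 : ∏ i ∈ c.support, B i (flip σ a i) = ∏ i ∈ c.support, B i (c⁻¹ i) := by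
      refine Finset.prod_congr rfl fun x hx => ?_
      rw [hP1 x, if_pos hx]
    have hmeminv : ∀ x ∈ c.support, c⁻¹ x ∈ c.support := by
      intro x hx
      have : c⁻¹ x ∈ (c⁻¹).support ↔ x ∈ (c⁻¹).support := apply_mem_support
      rw [support_inv] at this
      exact this.mpr hx
    have h2 : ∏ i ∈ c.support, B i (c⁻¹ i) = ∏ j ∈ c.support, B (c j) j := by
      refine Finset.prod_nbij' (fun i => c⁻¹ i) (fun j => c j) hmeminv
        (fun j hj => apply_mem_support.mpr hj) (fun i _ => perm_apply_inv_self c i)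
        (fun j _ => perm_inv_apply_self c j) (fun i _ => ?_)
      rw [perm_apply_inv_self c]
    have h3 : ∏ j ∈ c.support, B (c j) j = - ∏ j ∈ c.support, B j (c j) := by
      have : ∀ j ∈ c.support, B (c j) j = -1 * B j (c j) := fun j _ => by
        rw [hskew]; ring
      rw [Finset.prod_congr rfl this, Finset.prod_mul_distrib, Finset.prod_const]
      rw [ha.neg_one_pow]
      ring
    have h4 : ∏ j ∈ c.support, B j (c j) = ∏ j ∈ c.support, B j (σ j) :=
      Finset.prod_congr rfl fun j hj => by rw [hσc j hj]
    rw [h1, h2, h3, h4]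
  rw [houter, hinner]
  ring

lemma min'_congr {α : Type*} [LinearOrder α] {s t : Finset α} (h : s = t)
    (hs : s.Nonempty) (ht : t.Nonempty) : s.min' hs = t.min' ht := by
  subst h; rfl

lemma sum_noninvol (B : Matrix (Fin n) (Fin n) ℝ) (hskew : ∀ i j, B j i = -B i j)
    (hnoeven : ∀ k : ℕ, 2 < k → Even k → ∀ v : Fin k → Fin n, Function.Injective v →
      ∃ j : Fin k, B (v j) (v (finRotate k j)) = 0) (k : ℕ) :
    ∑ σ ∈ Finset.univ.filter
        (fun σ : Equiv.Perm (Fin n) => ¬ (σ * σ = 1) ∧ σ.support.card = k),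
      ((Equiv.Perm.sign σ : ℤ) : ℝ) * ∏ i ∈ σ.support, B i (σ i) = 0 := by
  set A : Equiv.Perm (Fin n) → Finset (Fin n) := fun σ =>
    σ.support.filter (fun x => ¬ Even ((σ.cycleOf x).support.card)) with hA
  set g : Equiv.Perm (Fin n) → Equiv.Perm (Fin n) := fun σ =>
    if h : (A σ).Nonempty then flip σ ((A σ).min' h) else σ with hg
  have hgpos : ∀ σ (h : (A σ).Nonempty), g σ = flip σ ((A σ).min' h) := fun σ h => dif_pos h
  have hgneg : ∀ σ, ¬ (A σ).Nonempty → g σ = σ := fun σ h => dif_neg h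
  have hAodd : ∀ σ (h : (A σ).Nonempty), Odd ((σ.cycleOf ((A σ).min' h)).support.card) := by
    intro σ h
    have h1 : (A σ).min' h ∈ A σ := Finset.min'_mem (A σ) h
    have h2 := Finset.mem_filter.mp h1
    exact Nat.not_even_iff_odd.mp h2.2
  have hAflip : ∀ σ (h : (A σ).Nonempty), A (flip σ ((A σ).min' h)) = A σ := by
    intro σ h
    obtain ⟨_, hPsupp, _, _, hP6, _, _, _⟩ := flip_spec σ ((A σ).min' h) (hAodd σ h)
    show Finset.filter _ _ = Finset.filter _ _
    ext x
    simp only [Finset.mem_filter]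
    rw [hPsupp, hP6 x]
  have hzero : ∀ σ : Equiv.Perm (Fin n), ¬ (σ * σ = 1) → ¬ (A σ).Nonempty →
      ∏ i ∈ σ.support, B i (σ i) = 0 := by
    intro σ hninv hAempty
    by_contra hprod
    have hB : ∀ i ∈ σ.support, B i (σ i) ≠ 0 := by
      intro i hi hzero
      exact hprod (Finset.prod_eq_zero hi hzero)
    have hx : ∃ x, σ (σ x) ≠ x := by
      by_contra hall
      push_neg at hall
      exact hninv (Equiv.ext fun x => by
        simpa [Equiv.Perm.mul_apply] using hall x)
    obtain ⟨x, hx⟩ := hx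
    have hxs : x ∈ σ.support := by
      rw [mem_support]
      intro h
      exact hx (by rw [h, h])
    rcases cycle_card_two_or_odd B hnoeven σ hB x hxs with h2 | hodd
    · have hord : orderOf (σ.cycleOf x) = 2 := by
        rw [(isCycle_cycleOf σ (mem_support.mp hxs)).orderOf, h2]
      have hone : (σ.cycleOf x) ^ 2 = 1 := by
        rw [← hord]; exact pow_orderOf_eq_one _
      have h4 : (σ ^ 2) x = x := by
        rw [← cycleOf_pow_apply_self σ x 2, hone]; rfl
      rw [pow_two, Equiv.Perm.mul_apply] at h4
      exact hx h4
    · apply hAempty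
      refine ⟨x, ?_⟩
      exact Finset.mem_filter.mpr ⟨hxs, Nat.not_even_iff_odd.mpr hodd⟩
  refine Finset.sum_involution (fun σ _ => g σ) ?_ ?_ ?_ ?_
  · intro σ hσ
    simp only [Finset.mem_filter] at hσ
    show ((Equiv.Perm.sign σ : ℤ) : ℝ) * ∏ i ∈ σ.support, B i (σ i) +
      ((Equiv.Perm.sign (g σ) : ℤ) : ℝ) * ∏ i ∈ (g σ).support, B i ((g σ) i) = 0
    by_cases h : (A σ).Nonempty
    · obtain ⟨_, hPsupp, hPsign, _, _, _, _, _⟩ := flip_spec σ ((A σ).min' h) (hAodd σ h)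
      have hprod := flip_prod B hskew σ ((A σ).min' h) (hAodd σ h)
      rw [hgpos σ h, hPsign, hprod]
      ring
    · rw [hgneg σ h, hzero σ hσ.2.1 h]
      ring
  · intro σ hσ hne
    simp only [Finset.mem_filter] at hσ
    show ¬ (g σ = σ)
    by_cases h : (A σ).Nonempty
    · obtain ⟨_, _, _, _, _, _, hflne, _⟩ := flip_spec σ ((A σ).min' h) (hAodd σ h)
      rw [hgpos σ h]
      exact hflne
    · exfalso
      apply hne
      rw [hzero σ hσ.2.1 h]
      ring
  · intro σ hσ
    simp only [Finset.mem_filter] at hσ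
    show g σ ∈ Finset.filter
      (fun σ : Equiv.Perm (Fin n) => ¬ (σ * σ = 1) ∧ σ.support.card = k) Finset.univ
    by_cases h : (A σ).Nonempty
    · obtain ⟨_, hPsupp, _, _, _, hnotinv, _, _⟩ := flip_spec σ ((A σ).min' h) (hAodd σ h)
      rw [hgpos σ h]
      simp only [Finset.mem_filter]
      exact ⟨Finset.mem_univ _, hnotinv, by rw [hPsupp]; exact hσ.2.2⟩
    · rw [hgneg σ h]
      simp only [Finset.mem_filter]
      exact ⟨Finset.mem_univ _, hσ.2⟩
  · intro σ hσ
    show g (g σ) = σ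
    by_cases h : (A σ).Nonempty
    · obtain ⟨_, _, _, _, _, _, _, hflipflip⟩ := flip_spec σ ((A σ).min' h) (hAodd σ h)
      rw [hgpos σ h]
      have h3 : (A (flip σ ((A σ).min' h))).Nonempty := by
        rw [hAflip σ h]; exact h
      rw [hgpos _ h3, min'_congr (hAflip σ h) h3 h]
      exact hflipflip
    · rw [hgneg σ h, hgneg σ h]

end Stmt18Aux

open Stmt18Aux

/- Statement 18: if B is real skew-symmetric and its digraph has no even cycle of length
greater than 2, then det(xI - B) = ∑_{k even} m_k x^(n-k), where m_k is the sum over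
matchings covering k vertices (encoded as fixed-point-free involutions on their support,
i.e. permutations σ with σ * σ = 1 and |support σ| = k) of the product of the squared
entries, ∏ i ∈ support σ, |B i (σ i)| = ∏_{pairs {i,j}} (B i j)². -/
theorem stmt_18 (n : ℕ) (B : Matrix (Fin n) (Fin n) ℝ) (hskew : Bᵀ = -B)
    (hnoeven : ∀ k : ℕ, 2 < k → Even k → ∀ v : Fin k → Fin n, Function.Injective v →
      ∃ j : Fin k, B (v j) (v (finRotate k j)) = 0) :
    ∀ k ≤ n, B.charpoly.coeff (n - k) =
      if Even k then
        ∑ σ ∈ Finset.univ.filter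
            (fun σ : Equiv.Perm (Fin n) => σ * σ = 1 ∧ σ.support.card = k),
          ∏ i ∈ σ.support, |B i (σ i)|
      else 0 := by
  intro k hk
  have hskew' : ∀ i j, B j i = -B i j := fun i j => by
    have := congr_fun (congr_fun hskew i) j
    simpa [Matrix.transpose_apply, Matrix.neg_apply] using this
  have hdiag : ∀ i, B i i = 0 := fun i => by have := hskew' i i; linarith
  have hcardle : ∀ σ : Equiv.Perm (Fin n), σ.support.card ≤ n := fun σ => by
    have := Finset.card_le_card (Finset.subset_univ σ.support)
    simpa using this
  have hstep1 : B.charpoly.coeff (n - k) =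
      ∑ σ ∈ Finset.univ.filter (fun σ : Equiv.Perm (Fin n) => σ.support.card = k),
        ((Equiv.Perm.sign σ : ℤ) : ℝ) * ∏ i ∈ σ.support, B i (σ i) := by
    rw [Matrix.charpoly, Matrix.det_apply, Polynomial.finset_sum_coeff]
    have hterm : ∀ σ : Equiv.Perm (Fin n),
        (Equiv.Perm.sign σ • ∏ i, charmatrix B (σ i) i).coeff (n - k) =
        if σ.support.card = k then
          ((Equiv.Perm.sign σ : ℤ) : ℝ) * ∏ i ∈ σ.support, B i (σ i)
        else 0 := by
      intro σ
      have hprodsplit : ∏ i, charmatrix B (σ i) i =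
          (∏ i ∈ σ.support, charmatrix B (σ i) i) *
            ∏ i ∈ σ.supportᶜ, charmatrix B (σ i) i :=
        (Finset.prod_mul_prod_compl σ.support _).symm
      have hfix : ∏ i ∈ σ.supportᶜ, charmatrix B (σ i) i =
          Polynomial.X ^ (n - σ.support.card) := by
        have h1 : ∀ i ∈ σ.supportᶜ, charmatrix B (σ i) i = Polynomial.X := by
          intro i hi
          have hfixi : σ i = i := by
            have := Finset.mem_compl.mp hi
            rwa [Equiv.Perm.notMem_support] at this
          rw [hfixi, charmatrix_apply_eq, hdiag i, map_zero, sub_zero]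
        rw [Finset.prod_congr rfl h1, Finset.prod_const, Finset.card_compl,
          Fintype.card_fin]
      have hmov : ∏ i ∈ σ.support, charmatrix B (σ i) i =
          Polynomial.C ((-1) ^ σ.support.card * ∏ i ∈ σ.support, B (σ i) i) := by
        have h1 : ∀ i ∈ σ.support, charmatrix B (σ i) i =
            (-1) * Polynomial.C (B (σ i) i) := by
          intro i hi
          have : σ i ≠ i := Equiv.Perm.mem_support.mp hi
          rw [charmatrix_apply_ne _ _ _ this]
          ring
        rw [Finset.prod_congr rfl h1, Finset.prod_mul_distrib, Finset.prod_const,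
          _root_.map_mul, map_pow, map_neg, _root_.map_one, map_prod]
      rw [hprodsplit, hfix, hmov, Polynomial.coeff_smul, Polynomial.coeff_C_mul,
        Polynomial.coeff_X_pow]
      by_cases hck : σ.support.card = k
      · rw [if_pos hck, if_pos (by omega), mul_one]
        have hBprod : ∏ i ∈ σ.support, B (σ i) i =
            (-1) ^ σ.support.card * ∏ i ∈ σ.support, B i (σ i) := by
          have h1 : ∀ i ∈ σ.support, B (σ i) i = (-1) * B i (σ i) := fun i _ => by
            rw [hskew']; ring
          rw [Finset.prod_congr rfl h1, Finset.prod_mul_distrib, Finset.prod_const]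
        rw [hBprod]
        rw [Units.smul_def, zsmul_eq_mul]
        rw [← mul_assoc ((-1 : ℝ) ^ σ.support.card), ← mul_pow]
        norm_num
      · rw [if_neg hck]
        have hne : ¬ (n - k = n - σ.support.card) := by
          have := hcardle σ
          omega
        rw [if_neg hne, mul_zero, smul_zero]
    rw [Finset.sum_congr rfl (fun σ _ => hterm σ), Finset.sum_filter]
  rw [hstep1]
  have hsplit := Finset.sum_filter_add_sum_filter_not
    (Finset.univ.filter (fun σ : Equiv.Perm (Fin n) => σ.support.card = k))
    (fun σ => σ * σ = 1)
    (fun σ => ((Equiv.Perm.sign σ : ℤ) : ℝ) * ∏ i ∈ σ.support, B i (σ i))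
  have hset1 : (Finset.univ.filter
        (fun σ : Equiv.Perm (Fin n) => σ.support.card = k)).filter
          (fun σ => σ * σ = 1) =
      Finset.univ.filter (fun σ : Equiv.Perm (Fin n) => σ * σ = 1 ∧ σ.support.card = k) := by
    ext σ
    simp only [Finset.mem_filter, Finset.mem_univ, true_and]
    tauto
  have hset2 : (Finset.univ.filter
        (fun σ : Equiv.Perm (Fin n) => σ.support.card = k)).filter
          (fun σ => ¬ (σ * σ = 1)) =
      Finset.univ.filter
        (fun σ : Equiv.Perm (Fin n) => ¬ (σ * σ = 1) ∧ σ.support.card = k) := by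
    ext σ
    simp only [Finset.mem_filter, Finset.mem_univ, true_and]
    tauto
  rw [hset1, hset2, sum_noninvol B hskew' hnoeven k, add_zero] at hsplit
  rw [← hsplit]
  have hcongr : ∑ σ ∈ Finset.univ.filter
      (fun σ : Equiv.Perm (Fin n) => σ * σ = 1 ∧ σ.support.card = k),
      ((Equiv.Perm.sign σ : ℤ) : ℝ) * ∏ i ∈ σ.support, B i (σ i) =
      ∑ σ ∈ Finset.univ.filter
      (fun σ : Equiv.Perm (Fin n) => σ * σ = 1 ∧ σ.support.card = k),
      ∏ i ∈ σ.support, |B i (σ i)| := by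
    refine Finset.sum_congr rfl fun σ hσ => ?_
    simp only [Finset.mem_filter, Finset.mem_univ, true_and] at hσ
    exact invol_value B hskew' σ.support.card σ rfl hσ.1
  rw [hcongr]
  by_cases hEven : Even k
  · rw [if_pos hEven]
  · rw [if_neg hEven]
    have hempty : Finset.univ.filter
        (fun σ : Equiv.Perm (Fin n) => σ * σ = 1 ∧ σ.support.card = k) = ∅ := by
      rw [Finset.filter_eq_empty_iff]
      intro σ _
      intro hcon
      exact hEven (hcon.2 ▸ invol_card_even σ.support.card σ rfl hcon.1)
    rw [hempty, Finset.sum_empty]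
end

section
/- Let A be an n×n real matrix with zero diagonal such that A i j · A j i < 0 whenever A i j ≠ 0 (A i j ≠ 0 iff A j i ≠ 0). Let L be a set of vertex-disjoint directed cycles of the digraph of A that contains at least one cycle of odd length ≥ 3, and let L′ be obtained from L by reversing one such odd cycle C, assuming additionally that the cycle weights of C and its reverse have equal absolute value and the reverse arcs exist. If moreover ω(C) = ω(C*) would hold for the underlying positive weights, then the contributions ω_A(L) and ω_A(L′) to the determinant expansion satisfy ω_A(L) = −ω_A(L′). -/
/-
Every 2-cycle of a skew-signing has negative weight, and the arcs of a cycle `C` together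
with those of its reverse `C*` form `|C|` such 2-cycles. For odd `|C|` the weights of `C` and `C*`
therefore have opposite signs, and since their absolute values agree they are negatives of each other.
-/

section Sign

variable {ι R : Type*} [CommRing R] [LinearOrder R] [IsStrictOrderedRing R]

theorem Finset.prod_neg_of_odd_card {s : Finset ι} {f : ι → R} (hs : Odd s.card)
    (hf : ∀ i ∈ s, f i < 0) : ∏ i ∈ s, f i < 0 := by
  have hprod : ∏ i ∈ s, f i = (-1) ^ s.card * ∏ i ∈ s, -f i := by
    simpa only [neg_neg] using Finset.prod_neg (s := s) fun i => -f i
  rw [hprod, hs.neg_one_pow, neg_one_mul, neg_neg_iff_pos]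
  exact Finset.prod_pos fun i hi => neg_pos.mpr (hf i hi)

theorem prod_mul_prod_neg_of_odd_card [Fintype ι] {f g : ι → R} (hι : Odd (Fintype.card ι))
    (hfg : ∀ i, f i * g i < 0) : (∏ i, f i) * ∏ i, g i < 0 := by
  rw [← Finset.prod_mul_distrib]
  exact Finset.prod_neg_of_odd_card hι fun i _ => hfg i

theorem eq_neg_of_abs_eq_of_mul_neg {a b : R} (hab : |a| = |b|) (hmul : a * b < 0) : a = -b := by
  rcases abs_eq_abs.mp hab with rfl | h
  · exact absurd hmul (mul_self_nonneg a).not_gt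
  · exact h

end Sign

theorem cycle_weight_mul_reverse_neg {n k : ℕ} {A : Matrix (Fin n) (Fin n) ℝ}
    (hskewsign : ∀ i j : Fin n, A i j ≠ 0 → A i j * A j i < 0) (hodd : Odd k) (v : Fin k → Fin n)
    (harcs : ∀ j : Fin k, A (v j) (v (finRotate k j)) ≠ 0) :
    (∏ j : Fin k, A (v j) (v (finRotate k j))) * ∏ j : Fin k, A (v (finRotate k j)) (v j) < 0 :=
  prod_mul_prod_neg_of_odd_card (by rwa [Fintype.card_fin]) fun j => hskewsign _ _ (harcs j)

theorem stmt_19_general (n : ℕ) (A : Matrix (Fin n) (Fin n) ℝ)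
    (hskewsign : ∀ i j : Fin n, A i j ≠ 0 → A i j * A j i < 0)
    (k : ℕ) (hodd : Odd k) (v : Fin k → Fin n)
    (harcs : ∀ j : Fin k, A (v j) (v (finRotate k j)) ≠ 0)
    (habs : |∏ j : Fin k, A (v j) (v (finRotate k j))| =
      |∏ j : Fin k, A (v (finRotate k j)) (v j)|)
    (W : ℝ) :
    W * (∏ j : Fin k, A (v j) (v (finRotate k j))) =
      -(W * ∏ j : Fin k, A (v (finRotate k j)) (v j)) := by
  rw [eq_neg_of_abs_eq_of_mul_neg habs (cycle_weight_mul_reverse_neg hskewsign hodd v harcs),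
    mul_neg]

theorem stmt_19 (n : ℕ) (A : Matrix (Fin n) (Fin n) ℝ)
    (hdiag : ∀ i, A i i = 0)
    (hskewsign : ∀ i j : Fin n, A i j ≠ 0 → A i j * A j i < 0)
    (k : ℕ) (hk : 3 ≤ k) (hodd : Odd k) (v : Fin k → Fin n)
    (hinj : Function.Injective v)
    (harcs : ∀ j : Fin k, A (v j) (v (finRotate k j)) ≠ 0)
    (harcs' : ∀ j : Fin k, A (v (finRotate k j)) (v j) ≠ 0)
    (habs : |∏ j : Fin k, A (v j) (v (finRotate k j))| =
      |∏ j : Fin k, A (v (finRotate k j)) (v j)|)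
    (W : ℝ) :
    W * (∏ j : Fin k, A (v j) (v (finRotate k j))) =
      -(W * ∏ j : Fin k, A (v (finRotate k j)) (v j)) :=
  stmt_19_general n A hskewsign k hodd v harcs habs W
end
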